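/- arXiv:2111.04968 — 7 statements merged into one kernel-verified Lean document; each statement's English description precedes it below -/
import Mathlib

section
/- Let L and K be two isoclinic finite-dimensional Lie algebras over a field k. Then L and K have the same breadth type. -/
/- Common definitions: breadth, breadth type, derived subalgebra, Camina Lie algebras,
nilpotency class, minimal generation, and free nilpotent Lie algebras. -/

open Module

section Defs

variable (k : Type*) [Field k]

/-- The breadth of an element `x` of a Lie algebra: the rank of the adjoint map `ad x`
(equivalently, the codimension of the centralizer of `x`). -/
noncomputable def breadth (L : Type*) [LieRing L] [LieAlgebra k L] (x : L) : ℕ :=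
  Module.finrank k (LinearMap.range (LieAlgebra.ad k L x))

/-- A Lie algebra has breadth type `S` if `S` is exactly the set of breadths of its elements. -/
def HasBreadthType (L : Type*) [LieRing L] [LieAlgebra k L] (S : Set ℕ) : Prop :=
  Set.range (breadth k L) = S

/-- The derived subalgebra `L' = [L, L]` as a Lie ideal. -/
abbrev derivedIdeal (L : Type*) [LieRing L] [LieAlgebra k L] : LieIdeal k L :=
  ⁅(⊤ : LieIdeal k L), (⊤ : LieIdeal k L)⁆

lemma lie_mem_derivedIdeal (L : Type*) [LieRing L] [LieAlgebra k L] (x y : L) :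
    ⁅x, y⁆ ∈ derivedIdeal k L :=
  LieSubmodule.lie_mem_lie (LieSubmodule.mem_top x) (LieSubmodule.mem_top y)

/-- A Camina Lie algebra: `[x, L] = L'` for every `x ∈ L \ L'`. -/
def IsCamina (L : Type*) [LieRing L] [LieAlgebra k L] : Prop :=
  ∀ x : L, x ∉ derivedIdeal k L →
    LinearMap.range (LieAlgebra.ad k L x) = (derivedIdeal k L).toSubmodule

/-- A Lie algebra is nilpotent of class exactly `c`. -/
def IsNilpotentOfClass (L : Type*) [LieRing L] [LieAlgebra k L] (c : ℕ) : Prop :=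
  LieModule.lowerCentralSeries k L L c = ⊥ ∧ ∀ b < c, LieModule.lowerCentralSeries k L L b ≠ ⊥

/-- A Lie algebra is minimally generated by `n` elements: some `n` elements generate it
and no fewer elements generate it. -/
def MinimallyGenerated (L : Type*) [LieRing L] [LieAlgebra k L] (n : ℕ) : Prop :=
  (∃ s : Finset L, s.card = n ∧ LieSubalgebra.lieSpan k L ↑s = ⊤) ∧
  ∀ s : Finset L, LieSubalgebra.lieSpan k L ↑s = ⊤ → n ≤ s.card

/-- The free `c`-step nilpotent Lie algebra on `n` generators: the quotient of the free
Lie algebra on `n` generators by the `(c+1)`-st term `γ_{c+1}` of its lower central series. -/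
abbrev FreeNilp (c n : ℕ) :=
  FreeLieAlgebra k (Fin n) ⧸
    LieModule.lowerCentralSeries k (FreeLieAlgebra k (Fin n)) (FreeLieAlgebra k (Fin n)) c

/-- The canonical generators of the free `c`-step nilpotent Lie algebra on `n` generators. -/
noncomputable def gen (c n : ℕ) (i : Fin n) : FreeNilp k c n :=
  LieSubmodule.Quotient.mk
    (N := LieModule.lowerCentralSeries k (FreeLieAlgebra k (Fin n)) (FreeLieAlgebra k (Fin n)) c)
    (FreeLieAlgebra.of k i)

end Defs

/-- Two Lie algebras are isoclinic: there are compatible isomorphisms between the central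
quotients and between the derived subalgebras commuting with the bracket maps. -/
def Isoclinic (k : Type*) [Field k] (L K : Type*) [LieRing L] [LieAlgebra k L]
    [LieRing K] [LieAlgebra k K] : Prop :=
  ∃ (φ : (L ⧸ LieAlgebra.center k L) ≃ₗ⁅k⁆ (K ⧸ LieAlgebra.center k K))
    (θ : derivedIdeal k L ≃ₗ⁅k⁆ derivedIdeal k K),
    ∀ (x y : L) (x' y' : K),
      φ (LieSubmodule.Quotient.mk (N := LieAlgebra.center k L) x) =
        LieSubmodule.Quotient.mk (N := LieAlgebra.center k K) x' →
      φ (LieSubmodule.Quotient.mk (N := LieAlgebra.center k L) y) =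
        LieSubmodule.Quotient.mk (N := LieAlgebra.center k K) y' →
      (θ ⟨⁅x, y⁆, lie_mem_derivedIdeal k L x y⟩ : K) = ⁅x', y'⁆

section AuxProof

variable {k : Type*} [Field k] {L K : Type*} [LieRing L] [LieAlgebra k L]
    [LieRing K] [LieAlgebra k K]

/-- The bracket-with-`x` map, landing in the derived ideal. -/
noncomputable def bracketMap (k : Type*) [Field k] (L : Type*) [LieRing L] [LieAlgebra k L]
    (x : L) : L →ₗ[k] (derivedIdeal k L) where
  toFun y := ⟨⁅x, y⁆, lie_mem_derivedIdeal k L x y⟩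
  map_add' y z := by ext; simp
  map_smul' c y := by ext; simp

lemma range_ad_eq (x : L) :
    LinearMap.range (LieAlgebra.ad k L x) =
      Submodule.map (derivedIdeal k L).toSubmodule.subtype
        (LinearMap.range (bracketMap k L x)) := by
  ext z
  constructor
  · rintro ⟨y, rfl⟩
    exact ⟨bracketMap k L x y, ⟨y, rfl⟩, rfl⟩
  · rintro ⟨_, ⟨y, rfl⟩, rfl⟩
    exact ⟨y, rfl⟩

lemma breadth_eq_of_isoclinic_aux
    (φ : (L ⧸ LieAlgebra.center k L) ≃ₗ⁅k⁆ (K ⧸ LieAlgebra.center k K))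
    (θ : derivedIdeal k L ≃ₗ⁅k⁆ derivedIdeal k K)
    (hc : ∀ (x y : L) (x' y' : K),
      φ (LieSubmodule.Quotient.mk (N := LieAlgebra.center k L) x) =
        LieSubmodule.Quotient.mk (N := LieAlgebra.center k K) x' →
      φ (LieSubmodule.Quotient.mk (N := LieAlgebra.center k L) y) =
        LieSubmodule.Quotient.mk (N := LieAlgebra.center k K) y' →
      (θ ⟨⁅x, y⁆, lie_mem_derivedIdeal k L x y⟩ : K) = ⁅x', y'⁆)
    (x : L) (x' : K)
    (hx : φ (LieSubmodule.Quotient.mk (N := LieAlgebra.center k L) x) =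
      LieSubmodule.Quotient.mk (N := LieAlgebra.center k K) x') :
    breadth k L x = breadth k K x' := by
  have hmap : Submodule.map (θ.toLinearEquiv : derivedIdeal k L →ₗ[k] derivedIdeal k K)
      (LinearMap.range (bracketMap k L x)) = LinearMap.range (bracketMap k K x') := by
    apply le_antisymm
    · rintro _ ⟨_, ⟨y, rfl⟩, rfl⟩
      obtain ⟨yb2, hyb2⟩ := LieSubmodule.Quotient.surjective_mk'
        (N := LieAlgebra.center k K) (φ (LieSubmodule.Quotient.mk (N := LieAlgebra.center k L) y))
      refine ⟨yb2, ?_⟩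
      ext
      simpa [bracketMap] using (hc x y x' yb2 hx hyb2.symm).symm
    · rintro _ ⟨y', rfl⟩
      obtain ⟨yb, hyb⟩ := φ.surjective
        (LieSubmodule.Quotient.mk (N := LieAlgebra.center k K) y')
      obtain ⟨y, rfl⟩ := LieSubmodule.Quotient.surjective_mk' (N := LieAlgebra.center k L) yb
      refine ⟨bracketMap k L x y, ⟨y, rfl⟩, ?_⟩
      ext
      simpa [bracketMap] using hc x y x' y' hx hyb
  unfold breadth
  rw [range_ad_eq, range_ad_eq, Submodule.finrank_map_subtype_eq,
    Submodule.finrank_map_subtype_eq, ← hmap, LinearEquiv.finrank_map_eq]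
  rfl

lemma isoclinic_symm (h : Isoclinic k L K) : Isoclinic k K L := by
  obtain ⟨φ, θ, hc⟩ := h
  refine ⟨φ.symm, θ.symm, fun x y x' y' hx hy => ?_⟩
  have hx' : φ (LieSubmodule.Quotient.mk (N := LieAlgebra.center k L) x') =
      LieSubmodule.Quotient.mk (N := LieAlgebra.center k K) x := by
    rw [← hx]; exact (φ.apply_symm_apply _)
  have hy' : φ (LieSubmodule.Quotient.mk (N := LieAlgebra.center k L) y') =
      LieSubmodule.Quotient.mk (N := LieAlgebra.center k K) y := by
    rw [← hy]; exact (φ.apply_symm_apply _)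
  have := hc x' y' x y hx' hy'
  have h2 : θ ⟨⁅x', y'⁆, lie_mem_derivedIdeal k L x' y'⟩ =
      ⟨⁅x, y⁆, lie_mem_derivedIdeal k K x y⟩ := Subtype.ext this
  have h3 := congrArg θ.symm h2
  rw [θ.symm_apply_apply] at h3
  exact congrArg Subtype.val h3.symm

lemma range_breadth_subset (h : Isoclinic k L K) :
    Set.range (breadth k L) ⊆ Set.range (breadth k K) := by
  obtain ⟨φ, θ, hc⟩ := h
  rintro _ ⟨x, rfl⟩
  obtain ⟨x', hx'⟩ := LieSubmodule.Quotient.surjective_mk'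
    (N := LieAlgebra.center k K) (φ (LieSubmodule.Quotient.mk (N := LieAlgebra.center k L) x))
  exact ⟨x', (breadth_eq_of_isoclinic_aux φ θ hc x x' hx'.symm).symm⟩

end AuxProof

/-- isoclinic finite-dimensional Lie algebras have the same breadth type. -/
theorem isoclinic_same_breadth_type
    (k : Type*) [Field k] (L K : Type*) [LieRing L] [LieAlgebra k L]
    [LieRing K] [LieAlgebra k K] [FiniteDimensional k L] [FiniteDimensional k K]
    (h : Isoclinic k L K) :
    Set.range (breadth k L) = Set.range (breadth k K) := by
  exact le_antisymm (range_breadth_subset h) (range_breadth_subset (isoclinic_symm h))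
end

section
/- Let L be a finite-dimensional nilpotent stem Lie algebra over a field k of breadth type (0,1). Then L is isomorphic to the Heisenberg Lie algebra H_m for some m ≥ 1. -/
/- Common definitions: breadth, breadth type, derived subalgebra, Camina Lie algebras,
nilpotency class, minimal generation, and free nilpotent Lie algebras. -/

open Module

/-!
If every element has breadth at most one and `z = ⁅x, y⁆ ≠ 0`, then every bracket lies in
`k ∙ z`: when `a` commutes with `x` and `y`, compare `ad a` with `ad (x + a)`. In a nilpotent
Lie algebra `ad a` acts on the line `k ∙ z` by a nilpotent, hence zero, scalar, so `z` is
central. Writing `⁅a, b⁆ = B a b • z` defines an alternating form `B` whose radical is the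
center, which the stem condition pins down to `k ∙ z`. A symplectic basis of `B`, completed by
`z`, is then a Heisenberg basis.
-/

section Symplectic

variable {k V : Type*} [Field k] [AddCommGroup V] [Module k V] {B : V →ₗ[k] V →ₗ[k] k}

structure IsSymplecticFamily {ι : Type*} [DecidableEq ι] (B : V →ₗ[k] V →ₗ[k] k)
    (e f : ι → V) : Prop where
  apply_e_f : ∀ i j, B (e i) (f j) = if i = j then 1 else 0
  apply_e_e : ∀ i j, B (e i) (e j) = 0
  apply_f_f : ∀ i j, B (f i) (f j) = 0

theorem IsSymplecticFamily.linearIndependent {ι : Type*} [Fintype ι] [DecidableEq ι]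
    {e f : ι → V} (h : IsSymplecticFamily B e f) (hB : B.IsAlt) {z : V} (hz : z ≠ 0)
    (hBz : ∀ x, B z x = 0) :
    LinearIndependent k (Sum.elim e (Sum.elim f fun _ : Unit => z)) := by
  have hfe : ∀ i j, B (f j) (e i) = -if i = j then 1 else 0 := fun i j => by
    rw [← hB.neg, h.apply_e_f]
  have hxz : ∀ x, B x z = 0 := fun x => hB.eq_iff.mp (hBz x)
  rw [Fintype.linearIndependent_iff]
  intro c hc
  have he : ∀ j, c (.inl j) = 0 := fun j => by
    simpa [Fintype.sum_sum_type, hfe, h.apply_f_f, hxz] using congrArg (B (f j)) hc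
  have hf : ∀ j, c (.inr (.inl j)) = 0 := fun j => by
    simpa [Fintype.sum_sum_type, h.apply_e_f, h.apply_e_e, hxz] using congrArg (B (e j)) hc
  have hz' : c (.inr (.inr ())) = 0 := by
    simpa [Fintype.sum_sum_type, he, hf, hz] using hc
  rintro (i | i | ⟨⟩)
  exacts [he i, hf i, hz']

theorem IsSymplecticFamily.cons (hB : B.IsAlt) {m : ℕ} {e f : Fin m → V}
    (h : IsSymplecticFamily B e f) {v w : V} (hvw : B v w = 1)
    (he : ∀ i, B v (e i) = 0 ∧ B w (e i) = 0) (hf : ∀ i, B v (f i) = 0 ∧ B w (f i) = 0) :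
    IsSymplecticFamily B (Fin.cons v e : Fin (m + 1) → V) (Fin.cons w f) := by
  have he' : ∀ i, B (e i) v = 0 ∧ B (e i) w = 0 := fun i =>
    ⟨hB.eq_iff.mp (he i).1, hB.eq_iff.mp (he i).2⟩
  have hf' : ∀ i, B (f i) v = 0 ∧ B (f i) w = 0 := fun i =>
    ⟨hB.eq_iff.mp (hf i).1, hB.eq_iff.mp (hf i).2⟩
  refine ⟨fun i j => ?_, fun i j => ?_, fun i j => ?_⟩ <;>
    cases i using Fin.cases <;> cases j using Fin.cases <;>
    simp [hvw, hB.self_eq_zero, he, hf, he', hf', h.apply_e_f, h.apply_e_e, h.apply_f_f,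
      Fin.succ_ne_zero, eq_comm (a := (0 : Fin (m + 1)))]

theorem LinearMap.IsAlt.sub_smul_add_smul_mem (hB : B.IsAlt) {v w : V} (hvw : B v w = 1)
    {W : Submodule k V} (hv : v ∈ W) (hw : w ∈ W) {x : V} (hx : x ∈ W) :
    x - B v x • w + B w x • v ∈ W ⊓ LinearMap.ker (B v) ⊓ LinearMap.ker (B w) := by
  have hwv : B w v = -1 := by rw [← hB.neg, hvw]
  refine ⟨⟨W.add_mem (W.sub_mem hx (W.smul_mem _ hw)) (W.smul_mem _ hv), ?_⟩, ?_⟩ <;>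
    simp [hvw, hwv, hB.self_eq_zero]

theorem LinearMap.IsAlt.radical_inf_ker_inf_ker_le (hB : B.IsAlt) {v w : V} (hvw : B v w = 1)
    {W Z : Submodule k V} (hv : v ∈ W) (hw : w ∈ W)
    (hW : ∀ u ∈ W, (∀ x ∈ W, B u x = 0) → u ∈ Z)
    {u : V} (hu : u ∈ W ⊓ LinearMap.ker (B v) ⊓ LinearMap.ker (B w))
    (hBu : ∀ x ∈ W ⊓ LinearMap.ker (B v) ⊓ LinearMap.ker (B w), B u x = 0) : u ∈ Z := by
  obtain ⟨⟨huW, huv⟩, huw⟩ := hu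
  refine hW u huW fun x hx => ?_
  have huv' : B u v = 0 := hB.eq_iff.mp huv
  have huw' : B u w = 0 := hB.eq_iff.mp huw
  simpa [huv', huw'] using hBu _ (hB.sub_smul_add_smul_mem hvw hv hw hx)

theorem exists_apply_eq_one_of_not_le {z : V} {W : Submodule k V}
    (hW : ∀ u ∈ W, (∀ x ∈ W, B u x = 0) → u ∈ k ∙ z) (hWz : ¬W ≤ k ∙ z) :
    ∃ v ∈ W, ∃ w ∈ W, B v w = 1 := by
  obtain ⟨v, hvW, hvz⟩ := Set.not_subset.mp hWz
  obtain ⟨w, hwW, hvw⟩ : ∃ w ∈ W, B v w ≠ 0 := by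
    by_contra! h
    exact hvz (hW v hvW h)
  exact ⟨(B v w)⁻¹ • v, W.smul_mem _ hvW, w, hwW, by simp [hvw]⟩

theorem exists_isSymplecticFamily [FiniteDimensional k V] (hB : B.IsAlt) {z : V}
    (W : Submodule k V) (hW : ∀ u ∈ W, (∀ x ∈ W, B u x = 0) → u ∈ k ∙ z) :
    ∃ (m : ℕ) (e f : Fin m → V), IsSymplecticFamily B e f ∧ (∀ i, e i ∈ W ∧ f i ∈ W) ∧
      W ≤ Submodule.span k (Set.range e ∪ Set.range f ∪ {z}) := by
  induction W using WellFoundedLT.induction with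
  | _ W ih =>
  by_cases hWz : W ≤ k ∙ z
  · refine ⟨0, Fin.elim0, Fin.elim0, ⟨nofun, nofun, nofun⟩, nofun, hWz.trans ?_⟩
    exact Submodule.span_mono Set.subset_union_right
  obtain ⟨v, hvW, w, hwW, hvw⟩ := exists_apply_eq_one_of_not_le hW hWz
  set W' := W ⊓ LinearMap.ker (B v) ⊓ LinearMap.ker (B w)
  have hlt : W' < W := by
    refine lt_of_le_of_ne (inf_le_left.trans inf_le_left) fun h => ?_
    have : B w v = 0 := (h.symm ▸ hvW : v ∈ W').2
    rw [← hB.neg, hvw] at this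
    exact one_ne_zero (neg_eq_zero.mp this)
  obtain ⟨m, e, f, hef, hmem, hspan⟩ :=
    ih W' hlt fun u => hB.radical_inf_ker_inf_ker_le hvw hvW hwW hW
  refine ⟨m + 1, Fin.cons v e, Fin.cons w f,
    hef.cons hB hvw (fun i => ⟨(hmem i).1.1.2, (hmem i).1.2⟩)
      (fun i => ⟨(hmem i).2.1.2, (hmem i).2.2⟩),
    fun i => ?_, fun x hx => ?_⟩
  · cases i using Fin.cases
    exacts [⟨hvW, hwW⟩, ⟨(hmem _).1.1.1, (hmem _).2.1.1⟩]
  · set S := Set.range (Fin.cons v e : Fin (m + 1) → V) ∪ Set.range (Fin.cons w f) ∪ {z}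
    have hS : Set.range e ∪ Set.range f ∪ {z} ⊆ S := by
      simp only [S, Fin.range_cons]
      gcongr <;> exact Set.subset_insert _ _
    have hv : v ∈ Submodule.span k S := Submodule.subset_span (by simp [S, Fin.range_cons])
    have hw : w ∈ Submodule.span k S := Submodule.subset_span (by simp [S, Fin.range_cons])
    have hx' := Submodule.span_mono hS (hspan (hB.sub_smul_add_smul_mem hvw hvW hwW hx))
    have : x = (x - B v x • w + B w x • v) + B v x • w - B w x • v := by abel
    rw [this]
    exact sub_mem (add_mem hx' (Submodule.smul_mem _ _ hw)) (Submodule.smul_mem _ _ hv)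

theorem exists_basis_isSymplecticFamily [FiniteDimensional k V] (hB : B.IsAlt) {z : V}
    (hz : z ≠ 0) (hBz : ∀ x, B z x = 0) (hrad : ∀ u, (∀ x, B u x = 0) → u ∈ k ∙ z) :
    ∃ (m : ℕ) (e f : Fin m → V) (b : Basis (Fin m ⊕ Fin m ⊕ Unit) k V),
      IsSymplecticFamily B e f ∧ ⇑b = Sum.elim e (Sum.elim f fun _ => z) := by
  obtain ⟨m, e, f, hef, -, hspan⟩ :=
    exists_isSymplecticFamily hB ⊤ fun u _ hu => hrad u fun x => hu x trivial
  refine ⟨m, e, f, .mk (hef.linearIndependent hB hz hBz) ?_, hef, Basis.coe_mk _ _⟩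
  simpa [Set.Sum.elim_range, Set.union_assoc] using hspan

end Symplectic

section Lie

variable {k L : Type*} [Field k] [LieRing L] [LieAlgebra k L]

theorem exists_lie_ne_zero_of_breadth_ne_zero {x : L} (hx : breadth k L x ≠ 0) :
    ∃ y : L, ⁅x, y⁆ ≠ 0 := by
  by_contra! h
  apply hx
  rw [breadth, show LieAlgebra.ad k L x = 0 from LinearMap.ext h, LinearMap.range_zero,
    finrank_bot]

theorem exists_lie_ne_zero_of_mem_derivedIdeal {z : L} (hz : z ≠ 0)
    (h : z ∈ derivedIdeal k L) : ∃ a b : L, ⁅a, b⁆ ≠ 0 := by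
  by_contra! habel
  have hbot : derivedIdeal k L = ⊥ :=
    (LieSubmodule.lie_eq_bot_iff _ _).mpr fun a _ b _ => habel a b
  exact hz (by simpa [hbot] using h)

theorem derivedIdeal_eq_span_of_forall_lie_mem {z : L} (hz : z ∈ derivedIdeal k L)
    (h : ∀ a b : L, ⁅a, b⁆ ∈ k ∙ z) : (derivedIdeal k L).toSubmodule = k ∙ z := by
  refine le_antisymm ?_ ((Submodule.span_singleton_le_iff_mem _ _).mpr hz)
  rw [LieSubmodule.lieIdeal_oper_eq_linear_span', Submodule.span_le]
  rintro _ ⟨a, -, b, -, rfl⟩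
  exact h a b

theorem exists_lie_eq_smul {z : L} (hz : z ≠ 0) (h : ∀ a b : L, ⁅a, b⁆ ∈ k ∙ z) :
    ∃ B : L →ₗ[k] L →ₗ[k] k, ∀ a b, ⁅a, b⁆ = B a b • z := by
  obtain ⟨φ, hφ⟩ := Module.Projective.exists_dual_eq_one k hz
  refine ⟨(LieAlgebra.ad k L : L →ₗ[k] Module.End k L).compr₂ φ, fun a b => ?_⟩
  obtain ⟨c, hc⟩ := Submodule.mem_span_singleton.mp (h a b)
  simp [← hc, hφ]

theorem mem_center_of_lie_mem_span [LieRing.IsNilpotent L] {z : L}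
    (h : ∀ a : L, ⁅a, z⁆ ∈ k ∙ z) : z ∈ LieAlgebra.center k L := by
  rcases eq_or_ne z 0 with rfl | hz
  · exact zero_mem _
  rw [LieModule.mem_maxTrivSubmodule]
  intro a
  obtain ⟨c, hc⟩ := Submodule.mem_span_singleton.mp (h a)
  have hev : (LieAlgebra.ad k L a).HasEigenvalue c :=
    Module.End.hasEigenvalue_of_hasEigenvector ⟨Module.End.mem_eigenspace_iff.mpr hc.symm, hz⟩
  have hnil := hev.isNilpotent_of_isNilpotent (LieModule.isNilpotent_toEnd_of_isNilpotent k L L a)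
  rw [← hc, hnil.eq_zero, zero_smul]

variable [FiniteDimensional k L]

theorem range_ad_eq_span_of_breadth_le_one {x y : L} (hx : breadth k L x ≤ 1)
    (hxy : ⁅x, y⁆ ≠ 0) : LinearMap.range (LieAlgebra.ad k L x) = k ∙ ⁅x, y⁆ := by
  refine (Submodule.eq_of_le_of_finrank_le ?_ ?_).symm
  · exact (Submodule.span_singleton_le_iff_mem _ _).mpr (LinearMap.mem_range_self _ y)
  · rw [finrank_span_singleton hxy]
    exact hx

theorem range_ad_le_of_lie_ne_zero {a c : L} {Z : Submodule k L} (ha : breadth k L a ≤ 1)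
    (hac : ⁅a, c⁆ ≠ 0) (hc : LinearMap.range (LieAlgebra.ad k L c) ≤ Z) :
    LinearMap.range (LieAlgebra.ad k L a) ≤ Z := by
  rw [range_ad_eq_span_of_breadth_le_one ha hac, Submodule.span_singleton_le_iff_mem,
    ← lie_skew, neg_mem_iff]
  exact hc (LinearMap.mem_range_self _ a)

theorem lie_mem_span_of_breadth_le_one (h : ∀ x, breadth k L x ≤ 1) {x y : L}
    (hxy : ⁅x, y⁆ ≠ 0) (a b : L) : ⁅a, b⁆ ∈ k ∙ ⁅x, y⁆ := by
  set Z := k ∙ ⁅x, y⁆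
  have hx : LinearMap.range (LieAlgebra.ad k L x) ≤ Z :=
    (range_ad_eq_span_of_breadth_le_one (h x) hxy).le
  have hyx : ⁅y, x⁆ ≠ 0 := by rwa [← lie_skew, neg_ne_zero]
  have hy := range_ad_le_of_lie_ne_zero (h y) hyx hx
  suffices LinearMap.range (LieAlgebra.ad k L a) ≤ Z from this (LinearMap.mem_range_self _ b)
  by_cases hax : ⁅a, x⁆ = 0
  · by_cases hay : ⁅a, y⁆ = 0
    · -- `ad a = ad (x + a) - ad x`, where `⁅x + a, y⁆ = ⁅x, y⁆ ≠ 0`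
      have hxa : ⁅x + a, y⁆ = ⁅x, y⁆ := by rw [add_lie, hay, add_zero]
      have hxa' := range_ad_le_of_lie_ne_zero (h (x + a)) (hxa ▸ hxy) hy
      rintro _ ⟨c, rfl⟩
      have : ⁅a, c⁆ = ⁅x + a, c⁆ - ⁅x, c⁆ := by rw [add_lie, add_sub_cancel_left]
      rw [LieAlgebra.ad_apply, this]
      exact sub_mem (hxa' (LinearMap.mem_range_self _ c)) (hx (LinearMap.mem_range_self _ c))
    · exact range_ad_le_of_lie_ne_zero (h a) hay hy
  · exact range_ad_le_of_lie_ne_zero (h a) hax hx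

theorem exists_heisenberg_basis {z : L} (hz : z ≠ 0)
    (hder : (derivedIdeal k L).toSubmodule = k ∙ z)
    (hcen : (LieAlgebra.center k L).toSubmodule = k ∙ z) :
    ∃ m : ℕ, 1 ≤ m ∧ ∃ b : Basis (Fin m ⊕ Fin m ⊕ Unit) k L,
      (∀ i j : Fin m, ⁅b (Sum.inl i), b (Sum.inr (Sum.inl j))⁆ =
        if i = j then b (Sum.inr (Sum.inr ())) else 0) ∧
      (∀ i j : Fin m, ⁅b (Sum.inl i), b (Sum.inl j)⁆ = 0) ∧
      (∀ i j : Fin m, ⁅b (Sum.inr (Sum.inl i)), b (Sum.inr (Sum.inl j))⁆ = 0) ∧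
      (∀ v : L, ⁅b (Sum.inr (Sum.inr ())), v⁆ = 0) := by
  have hzc : ∀ a : L, ⁅z, a⁆ = 0 := fun a => by
    have hzcen : z ∈ LieAlgebra.center k L := by
      rw [← LieSubmodule.mem_toSubmodule, hcen]
      exact Submodule.mem_span_singleton_self z
    rw [← lie_skew, (LieModule.mem_maxTrivSubmodule k L L z).mp hzcen a, neg_zero]
  obtain ⟨B, hrel⟩ := exists_lie_eq_smul hz fun a b => by
    rw [← hder, LieSubmodule.mem_toSubmodule]
    exact lie_mem_derivedIdeal k L a b
  have hB0 : ∀ a b, ⁅a, b⁆ = 0 → B a b = 0 := fun a b hab =>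
    (smul_eq_zero.mp ((hrel a b).symm.trans hab)).resolve_right hz
  have hB : B.IsAlt := fun a => hB0 a a (lie_self a)
  have hBz : ∀ x, B z x = 0 := fun x => hB0 z x (hzc x)
  have hrad : ∀ u, (∀ x, B u x = 0) → u ∈ k ∙ z := fun u hu => by
    rw [← hcen, LieSubmodule.mem_toSubmodule, LieModule.mem_maxTrivSubmodule]
    intro x
    rw [← lie_skew, hrel, hu, zero_smul, neg_zero]
  obtain ⟨m, e, f, b, hef, hb⟩ := exists_basis_isSymplecticFamily hB hz hBz hrad
  refine ⟨m, Nat.one_le_iff_ne_zero.mpr ?_, b, fun i j => ?_, fun i j => ?_, fun i j => ?_, ?_⟩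
  · rintro rfl
    have hzd : z ∈ (derivedIdeal k L).toSubmodule := hder ▸ Submodule.mem_span_singleton_self z
    obtain ⟨x, y, hxy⟩ := exists_lie_ne_zero_of_mem_derivedIdeal hz hzd
    have hBzero : B = 0 := b.ext fun i => by
      rcases i with i | i | ⟨⟩
      exacts [i.elim0, i.elim0, by simpa [hb] using LinearMap.ext hBz]
    simp [hrel x y, hBzero] at hxy
  · simp [hrel, hb, hef.apply_e_f]
  · simp [hrel, hb, hef.apply_e_e]
  · simp [hrel, hb, hef.apply_f_f]
  · simpa [hb] using hzc

end Lie

/-- a finite-dimensional nilpotent stem Lie algebra of breadth type `(0,1)` is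
isomorphic to a Heisenberg Lie algebra `H_m`, i.e. it admits a basis
`{x_1, y_1, …, x_m, y_m, z}` with `[x_i, y_j] = δ_{ij} z` and `z` central (all other brackets
of basis elements zero). -/
theorem breadth_type_zero_one_heisenberg
    (k : Type*) [Field k] (L : Type*) [LieRing L] [LieAlgebra k L]
    [FiniteDimensional k L] [LieRing.IsNilpotent L]
    (hstem : LieAlgebra.center k L ≤ derivedIdeal k L)
    (hbt : HasBreadthType k L {0, 1}) :
    ∃ m : ℕ, 1 ≤ m ∧ ∃ b : Basis (Fin m ⊕ Fin m ⊕ Unit) k L,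
      (∀ i j : Fin m, ⁅b (Sum.inl i), b (Sum.inr (Sum.inl j))⁆ =
        if i = j then b (Sum.inr (Sum.inr ())) else 0) ∧
      (∀ i j : Fin m, ⁅b (Sum.inl i), b (Sum.inl j)⁆ = 0) ∧
      (∀ i j : Fin m, ⁅b (Sum.inr (Sum.inl i)), b (Sum.inr (Sum.inl j))⁆ = 0) ∧
      (∀ v : L, ⁅b (Sum.inr (Sum.inr ())), v⁆ = 0) := by
  have hle : ∀ x, breadth k L x ≤ 1 := fun x => by
    have hx : breadth k L x ∈ ({0, 1} : Set ℕ) := hbt ▸ Set.mem_range_self x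
    simp only [Set.mem_insert_iff, Set.mem_singleton_iff] at hx
    omega
  obtain ⟨x, hx⟩ : 1 ∈ Set.range (breadth k L) := hbt ▸ Set.mem_insert_of_mem _ rfl
  obtain ⟨y, hxy⟩ := exists_lie_ne_zero_of_breadth_ne_zero (hx ▸ one_ne_zero)
  have hbracket := lie_mem_span_of_breadth_le_one hle hxy
  have hder := derivedIdeal_eq_span_of_forall_lie_mem (lie_mem_derivedIdeal k L x y) hbracket
  have hcen : (LieAlgebra.center k L).toSubmodule = k ∙ ⁅x, y⁆ :=
    le_antisymm (hder ▸ (LieSubmodule.toSubmodule_le_toSubmodule _ _).mpr hstem)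
      ((Submodule.span_singleton_le_iff_mem _ _).mpr (mem_center_of_lie_mem_span (hbracket · _)))
  exact exists_heisenberg_basis hxy hder hcen
end

section
/- Let p be an odd prime and let 0 = m_0 < m_1 < ... < m_r (r ≥ 1) be nonnegative integers. Then there exists a finite-dimensional 2-step nilpotent Lie algebra over the finite field F_p of breadth type (m_0, m_1, ..., m_r). -/
/- Common definitions: breadth, breadth type, derived subalgebra, Camina Lie algebras,
nilpotency class, minimal generation, and free nilpotent Lie algebras. -/

open Module

/-!
Take fields `K i = 𝔽_{p^{m (i+1)}}` for `i < r`, embed them `𝔽_p`-linearly into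
`Z = 𝔽_p^{m r}` as the nested coordinate subspaces `𝔽_p^{m (i+1)} ⊆ 𝔽_p^{m r}`, and put
`L = (⊕ᵢ K i²) ⊕ Z` with `Z` central and `⁅(a, b), (c, d)⁆ = a d - c b ∈ K i ⊆ Z` on each
summand `K i²`. If the last nonzero component of `u` is `(a, b) ∈ K i²`, then `ad u` has image
exactly `K i`: over a field `(c, d) ↦ a d - c b` is onto as soon as `(a, b) ≠ 0`, and the
earlier components land in the smaller subspaces. So the breadths are `0` and the `m (i+1)`.
-/

/-- `U × Z` with the bracket `⁅(u, z), (v, w)⁆ = (0, B u v - B v u)`. -/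
def TwoStepOfBilin {k U Z : Type*} [CommRing k] [AddCommGroup U] [Module k U] [AddCommGroup Z]
    [Module k Z] (_B : U →ₗ[k] U →ₗ[k] Z) : Type _ :=
  U × Z

namespace TwoStepOfBilin

section CommRing

variable {k U Z : Type*} [CommRing k] [AddCommGroup U] [Module k U] [AddCommGroup Z] [Module k Z]
  (B : U →ₗ[k] U →ₗ[k] Z)

instance : AddCommGroup (TwoStepOfBilin B) := inferInstanceAs (AddCommGroup (U × Z))

instance : Module k (TwoStepOfBilin B) := inferInstanceAs (Module k (U × Z))

instance [Module.Finite k U] [Module.Finite k Z] : Module.Finite k (TwoStepOfBilin B) :=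
  inferInstanceAs (Module.Finite k (U × Z))

def fst : TwoStepOfBilin B →ₗ[k] U := LinearMap.fst k U Z

def inl : U →ₗ[k] TwoStepOfBilin B := LinearMap.inl k U Z

def inr : Z →ₗ[k] TwoStepOfBilin B := LinearMap.inr k U Z

variable {B}

@[simp] lemma fst_inl (u : U) : fst B (inl B u) = u := rfl

@[simp] lemma fst_inr (z : Z) : fst B (inr B z) = 0 := rfl

lemma fst_surjective : Function.Surjective (fst B) := fun u => ⟨inl B u, rfl⟩

lemma inr_injective : Function.Injective (inr B) := LinearMap.inr_injective

variable (B) in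
instance : LieRing (TwoStepOfBilin B) where
  bracket x y := inr B ((B - B.flip) (fst B x) (fst B y))
  add_lie x y z := by simp only [map_add, LinearMap.add_apply]
  lie_add x y z := by simp only [map_add]
  lie_self x := by simp
  leibniz_lie x y z := by simp

variable (B) in
instance : LieAlgebra k (TwoStepOfBilin B) where
  lie_smul t x y := by
    change inr B ((B - B.flip) (fst B x) (fst B (t • y))) = t • inr B _
    simp only [map_smul]

lemma lie_def (x y : TwoStepOfBilin B) : ⁅x, y⁆ = inr B ((B - B.flip) (fst B x) (fst B y)) := rfl

lemma ad_eq (x : TwoStepOfBilin B) :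
    (LieAlgebra.ad k _ x : TwoStepOfBilin B →ₗ[k] TwoStepOfBilin B) =
      (inr B ∘ₗ (B - B.flip) (fst B x)) ∘ₗ fst B :=
  rfl

lemma lie_lie_eq_zero (x y z : TwoStepOfBilin B) : ⁅x, ⁅y, z⁆⁆ = 0 := by
  simp [lie_def]

end CommRing

section Field

variable {k U Z : Type*} [Field k] [AddCommGroup U] [Module k U] [AddCommGroup Z] [Module k Z]
  {B : U →ₗ[k] U →ₗ[k] Z}

lemma breadth_eq (x : TwoStepOfBilin B) :
    breadth k (TwoStepOfBilin B) x = finrank k (LinearMap.range ((B - B.flip) (fst B x))) := by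
  rw [breadth, ad_eq,
    LinearMap.range_comp_of_range_eq_top _ (LinearMap.range_eq_top.2 fst_surjective),
    LinearMap.range_comp]
  exact (Submodule.equivMapOfInjective _ inr_injective _).finrank_eq.symm

lemma breadth_eq_zero {x : TwoStepOfBilin B} (hx : fst B x = 0) :
    breadth k (TwoStepOfBilin B) x = 0 := by
  rw [breadth_eq, hx, map_zero, LinearMap.range_zero, finrank_bot]

lemma isNilpotentOfClass_two (hB : B ≠ B.flip) : IsNilpotentOfClass k (TwoStepOfBilin B) 2 := by
  obtain ⟨u, v, huv⟩ : ∃ u v, B u v ≠ B v u := by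
    by_contra! h
    exact hB (LinearMap.ext₂ h)
  have hlcs : LieModule.lowerCentralSeries k (TwoStepOfBilin B) (TwoStepOfBilin B) 1 ≤
      LieModule.maxTrivSubmodule k (TwoStepOfBilin B) (TwoStepOfBilin B) := by
    rw [LieModule.lowerCentralSeries_succ, LieModule.lowerCentralSeries_zero,
      LieSubmodule.lie_le_iff]
    exact fun x _ y _ => (LieModule.mem_maxTrivSubmodule ..).2 fun z => lie_lie_eq_zero z x y
  have hne : ⁅inl B u, inl B v⁆ ≠ 0 := by
    rw [lie_def, ← map_zero (inr B), inr_injective.ne_iff]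
    simpa [sub_eq_zero] using huv
  refine ⟨?_, fun b hb => ?_⟩
  · rw [LieModule.lowerCentralSeries_succ, eq_bot_iff,
      ← LieModule.ideal_oper_maxTrivSubmodule_eq_bot k _ _ ⊤]
    exact LieSubmodule.mono_lie_right _ hlcs
  · intro hbot
    have hmem : ⁅inl B u, inl B v⁆ ∈
        LieModule.lowerCentralSeries k (TwoStepOfBilin B) (TwoStepOfBilin B) b :=
      LieModule.antitone_lowerCentralSeries _ _ _ (Nat.le_of_lt_succ hb) <| by
        rw [LieModule.lowerCentralSeries_succ]
        exact LieSubmodule.lie_mem_lie (LieSubmodule.mem_top _) (LieSubmodule.mem_top _)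
    exact hne ((LieSubmodule.mem_bot _).1 (hbot ▸ hmem))

end Field

end TwoStepOfBilin

section FieldPairing

variable {k ι Z : Type*} [CommRing k] [Fintype ι] {K : ι → Type*} [∀ i, CommRing (K i)]
  [∀ i, Algebra k (K i)] [AddCommGroup Z] [Module k Z]

/-- `fieldPairing j u v = ∑ i, j i ((u i).1 * (v i).2)`. -/
def fieldPairing (j : ∀ i, K i →ₗ[k] Z) : (∀ i, K i × K i) →ₗ[k] (∀ i, K i × K i) →ₗ[k] Z :=
  ∑ i, ((LinearMap.mul k (K i)).compl₁₂ (LinearMap.fst k _ _ ∘ₗ LinearMap.proj i)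
    (LinearMap.snd k _ _ ∘ₗ LinearMap.proj i)).compr₂ (j i)

variable (j : ∀ i, K i →ₗ[k] Z)

lemma fieldPairing_sub_flip_apply (u v : ∀ i, K i × K i) :
    (fieldPairing j - (fieldPairing j).flip) u v =
      ∑ i, j i ((u i).1 * (v i).2 - (v i).1 * (u i).2) := by
  simp [fieldPairing, ← Finset.sum_sub_distrib]

end FieldPairing

lemma Prod.exists_mul_sub_mul_eq {K : Type*} [Field K] {a : K × K} (ha : a ≠ 0) (c : K) :
    ∃ b : K × K, a.1 * b.2 - b.1 * a.2 = c := by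
  by_cases h1 : a.1 = 0
  · have h2 : a.2 ≠ 0 := fun h2 => ha (Prod.ext h1 h2)
    exact ⟨(-(c / a.2), 0), by simp [h2]⟩
  · exact ⟨(0, c / a.1), by simp [h1, mul_div_cancel₀]⟩

lemma Pi.exists_greatest_ne_zero {ι : Type*} [Fintype ι] [LinearOrder ι] {M : ι → Type*}
    [∀ i, Zero (M i)] {u : ∀ i, M i} (hu : u ≠ 0) : ∃ i₀, u i₀ ≠ 0 ∧ ∀ i, u i ≠ 0 → i ≤ i₀ := by
  classical
  obtain ⟨i, hi⟩ := Function.ne_iff.1 hu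
  obtain ⟨i₀, hi₀, hmax⟩ := (Finset.univ.filter (u · ≠ 0)).exists_max_image id ⟨i, by simpa⟩
  exact ⟨i₀, (Finset.mem_filter.1 hi₀).2, fun i hi => hmax i (by simpa)⟩

section Breadth

variable {k ι Z : Type*} [Field k] [Fintype ι] [LinearOrder ι] {K : ι → Type*}
  [∀ i, Field (K i)] [∀ i, Algebra k (K i)] [AddCommGroup Z] [Module k Z]
  {j : ∀ i, K i →ₗ[k] Z}

lemma range_fieldPairing_sub_flip (hj : Monotone fun i => LinearMap.range (j i))
    {u : ∀ i, K i × K i} {i₀ : ι} (hu : u i₀ ≠ 0) (hmax : ∀ i, u i ≠ 0 → i ≤ i₀) :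
    LinearMap.range ((fieldPairing j - (fieldPairing j).flip) u) = LinearMap.range (j i₀) := by
  apply le_antisymm
  · rintro _ ⟨v, rfl⟩
    rw [fieldPairing_sub_flip_apply]
    refine Submodule.sum_mem _ fun i _ => ?_
    by_cases hi : u i = 0
    · simp [hi]
    · exact hj (hmax i hi) ⟨_, rfl⟩
  · rintro _ ⟨c, rfl⟩
    obtain ⟨b, hb⟩ := Prod.exists_mul_sub_mul_eq hu c
    refine ⟨Pi.single i₀ b, ?_⟩
    rw [fieldPairing_sub_flip_apply, Finset.sum_eq_single_of_mem i₀ (Finset.mem_univ _)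
      fun i _ hi => by simp [Pi.single_eq_of_ne hi], Pi.single_eq_same, hb]

lemma range_fieldPairing_sub_flip_single (hj : Monotone fun i => LinearMap.range (j i)) (i : ι) :
    LinearMap.range ((fieldPairing j - (fieldPairing j).flip) (Pi.single i (1, 0))) =
      LinearMap.range (j i) := by
  refine range_fieldPairing_sub_flip hj (by simp) fun i' hi' => ?_
  by_contra hlt
  exact hi' (Pi.single_eq_of_ne (ne_of_not_le hlt) _)

lemma fieldPairing_ne_flip [Nonempty ι] (hj_inj : ∀ i, Function.Injective (j i))
    (hj : Monotone fun i => LinearMap.range (j i)) : fieldPairing j ≠ (fieldPairing j).flip := by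
  intro h
  obtain ⟨i⟩ := ‹Nonempty ι›
  have hrange := range_fieldPairing_sub_flip_single hj i
  rw [sub_eq_zero.2 h, LinearMap.zero_apply, LinearMap.range_zero, eq_comm,
    LinearMap.range_eq_bot] at hrange
  exact one_ne_zero (hj_inj i (by rw [hrange, LinearMap.zero_apply, map_zero]))

open TwoStepOfBilin in
theorem range_breadth_fieldPairing (hj_inj : ∀ i, Function.Injective (j i))
    (hj : Monotone fun i => LinearMap.range (j i)) :
    Set.range (breadth k (TwoStepOfBilin (fieldPairing j))) =
      insert 0 (Set.range fun i => finrank k (K i)) := by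
  ext b
  constructor
  · rintro ⟨x, rfl⟩
    by_cases hx : fst _ x = 0
    · exact Or.inl (breadth_eq_zero hx)
    · obtain ⟨i₀, hi₀, hmax⟩ := Pi.exists_greatest_ne_zero hx
      rw [breadth_eq, range_fieldPairing_sub_flip hj hi₀ hmax,
        LinearMap.finrank_range_of_inj (hj_inj i₀)]
      exact Or.inr ⟨i₀, rfl⟩
  · rintro (rfl | ⟨i, rfl⟩)
    · exact ⟨0, breadth_eq_zero (map_zero _)⟩
    · refine ⟨inl _ (Pi.single i (1, 0)), ?_⟩
      rw [breadth_eq, fst_inl, range_fieldPairing_sub_flip_single hj,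
        LinearMap.finrank_range_of_inj (hj_inj i)]

end Breadth

section Coordinates

variable {k : Type*} [Field k]

lemma mem_range_extendByZero_castLE {a N : ℕ} (h : a ≤ N) (z : Fin N → k) :
    z ∈ LinearMap.range (Function.ExtendByZero.linearMap k (Fin.castLE h)) ↔
      ∀ t : Fin N, a ≤ t → z t = 0 := by
  constructor
  · rintro ⟨f, rfl⟩ t ht
    exact Function.extend_apply' _ _ _ fun ⟨s, hs⟩ => by subst hs; exact ht.not_gt s.2
  · intro hz
    refine ⟨fun s => z (Fin.castLE h s), funext fun t => ?_⟩
    rw [Function.ExtendByZero.linearMap_apply]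
    by_cases ht : (t : ℕ) < a
    · exact (Fin.castLE_injective h).extend_apply (fun s => z (Fin.castLE h s)) 0 ⟨t, ht⟩
    · refine (Function.extend_apply' _ _ _ ?_).trans (hz t (not_lt.1 ht)).symm
      rintro ⟨s, rfl⟩
      exact ht s.2

lemma exists_injective_monotone_range {ι : Type*} [Preorder ι] {V : ι → Type*}
    [∀ i, AddCommGroup (V i)] [∀ i, Module k (V i)] [∀ i, FiniteDimensional k (V i)] {N : ℕ}
    (hmono : Monotone fun i => finrank k (V i)) (hN : ∀ i, finrank k (V i) ≤ N) :
    ∃ j : ∀ i, V i →ₗ[k] Fin N → k,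
      (∀ i, Function.Injective (j i)) ∧ Monotone fun i => LinearMap.range (j i) := by
  refine ⟨fun i => Function.ExtendByZero.linearMap k (Fin.castLE (hN i)) ∘ₗ
    (finBasis k (V i)).equivFun.toLinearMap, fun i => ?_, fun i i' hii' z => ?_⟩
  · exact (Function.extend_injective (Fin.castLE_injective _) 0).comp
      (finBasis k (V i)).equivFun.injective
  · simp only [LinearMap.range_comp_of_range_eq_top _ (LinearEquiv.range _),
      mem_range_extendByZero_castLE]
    exact fun hz t ht => hz t ((hmono hii').trans ht)

end Coordinates

theorem exists_two_step_nilpotent_of_breadth_type_general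
    (p : ℕ) [Fact p.Prime]
    (r : ℕ) (hr : 1 ≤ r) (m : Fin (r+1) → ℕ) (h0 : m 0 = 0) (hmono : StrictMono m) :
    ∃ (L : Type) (_ : LieRing L) (_ : LieAlgebra (ZMod p) L),
      FiniteDimensional (ZMod p) L ∧ IsNilpotentOfClass (ZMod p) L 2 ∧
      HasBreadthType (ZMod p) L (Set.range m) := by
  have hdeg (i : Fin r) : finrank (ZMod p) (GaloisField p (m i.succ)) = m i.succ :=
    GaloisField.finrank p (h0 ▸ hmono (Fin.succ_pos i)).ne'
  obtain ⟨j, hj_inj, hj⟩ := exists_injective_monotone_range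
    (V := fun i : Fin r => GaloisField p (m i.succ)) (N := m (Fin.last r))
    (fun i i' h => by simpa only [hdeg] using hmono.monotone (Fin.succ_le_succ_iff.2 h))
    (fun i => (hdeg i).trans_le (hmono.monotone (Fin.le_last _)))
  have : Nonempty (Fin r) := ⟨⟨0, hr⟩⟩
  refine ⟨TwoStepOfBilin (fieldPairing j), inferInstance, inferInstance, inferInstance,
    TwoStepOfBilin.isNilpotentOfClass_two (fieldPairing_ne_flip hj_inj hj), ?_⟩
  rw [HasBreadthType, range_breadth_fieldPairing hj_inj hj, Fin.range_fin_succ, h0]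
  simp only [hdeg]
  rfl

/-- for any odd prime `p` and any finite strictly increasing sequence
`0 = m_0 < m_1 < … < m_r` (with `r ≥ 1`), there exists a finite-dimensional 2-step
nilpotent Lie algebra over `F_p` of breadth type `(m_0, m_1, …, m_r)`. -/
theorem exists_two_step_nilpotent_of_breadth_type
    (p : ℕ) [Fact p.Prime] (hodd : p ≠ 2)
    (r : ℕ) (hr : 1 ≤ r) (m : Fin (r+1) → ℕ) (h0 : m 0 = 0) (hmono : StrictMono m) :
    ∃ (L : Type) (_ : LieRing L) (_ : LieAlgebra (ZMod p) L),
      FiniteDimensional (ZMod p) L ∧ IsNilpotentOfClass (ZMod p) L 2 ∧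
      HasBreadthType (ZMod p) L (Set.range m) :=
  exists_two_step_nilpotent_of_breadth_type_general p r hr m h0 hmono
end

section
/- Let L be a finite-dimensional Lie algebra over a field k, minimally generated by n elements x_1, ..., x_n, and suppose Z(L) = L' has dimension m. Let {y_1, ..., y_m} be a basis of L', and for 1 ≤ r ≤ m let X_r ∈ M_n(k) be the matrix whose (i,j) entry is γ_{ijr}, where [x_i, x_j] = γ_{ij1} y_1 + ... + γ_{ijm} y_m; each X_r is skew-symmetric. Then L is a Camina Lie algebra if and only if for all scalars ξ_1, ..., ξ_m ∈ k, singularity of ξ_1 X_1 + ... + ξ_m X_m implies ξ_1 = ... = ξ_m = 0; equivalently, if and only if the span of X_1, ..., X_m is an m-dimensional rank-n subspace of M_n(k) consisting of skew-symmetric matrices. -/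
/- Common definitions: breadth, breadth type, derived subalgebra, Camina Lie algebras,
nilpotency class, minimal generation, and free nilpotent Lie algebras. -/

open Module Matrix

/-!
As `L'` is central, `L = span x + L'`, and minimality makes the `x i` independent modulo `L'`.
A functional `f` on `L'` turns the bracket into an alternating form on `L` whose Gram matrix on
`x` is `∑ r, f (y r) • X r`. For `a = ∑ c i • x i + z` with `z ∈ L'`, the map `ad a` misses `L'`
exactly when some `f ≠ 0` kills `[a, L]`, i.e. when `c` lies in the left kernel of that Gram
matrix; so `L` is Camina iff every `f ≠ 0` has a nonsingular Gram matrix. Since the brackets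
`[x i, x j]` span `L'`, the Gram matrix determines `f`, which gives the dimension of the span
of the `X r`.
-/

section DerivedBracket

variable {k : Type*} [Field k] {L : Type*} [LieRing L] [LieAlgebra k L]

variable (k) in
def derivedBracket : L →ₗ[k] L →ₗ[k] derivedIdeal k L :=
  LinearMap.mk₂ k (fun a b => ⟨⁅a, b⁆, lie_mem_derivedIdeal k L a b⟩)
    (fun _ _ _ => Subtype.ext (add_lie _ _ _)) (fun _ _ _ => Subtype.ext (smul_lie _ _ _))
    (fun _ _ _ => Subtype.ext (lie_add _ _ _)) (fun _ _ _ => Subtype.ext (lie_smul _ _ _))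

lemma derivedBracket_swap (a b : L) :
    derivedBracket k a b = -derivedBracket k b a :=
  Subtype.ext (lie_skew a b).symm

lemma span_sup_derivedIdeal_eq_top {s : Set L} (hs : LieSubalgebra.lieSpan k L s = ⊤) :
    Submodule.span k s ⊔ (derivedIdeal k L).toSubmodule = ⊤ := by
  let P : LieSubalgebra k L :=
    { toSubmodule := Submodule.span k s ⊔ (derivedIdeal k L).toSubmodule
      lie_mem' := fun {a b} _ _ => Submodule.mem_sup_right (lie_mem_derivedIdeal k L a b) }
  have hP : LieSubalgebra.lieSpan k L s ≤ P :=
    LieSubalgebra.lieSpan_le.mpr fun a ha => Submodule.mem_sup_left (Submodule.subset_span ha)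
  exact top_le_iff.mp fun a _ => hP (hs ▸ LieSubalgebra.mem_top a)

lemma range_ad_eq_derivedIdeal_iff (a : L) :
    LinearMap.range (LieAlgebra.ad k L a) = (derivedIdeal k L).toSubmodule ↔
      ∀ f : Module.Dual k (derivedIdeal k L), f ∘ₗ derivedBracket k a = 0 → f = 0 := by
  have had : LieAlgebra.ad k L a =
      (derivedIdeal k L).toSubmodule.subtype ∘ₗ derivedBracket k a :=
    rfl
  rw [had, LinearMap.range_comp, (Submodule.map_injective_of_injective
    (Submodule.injective_subtype _)).eq_iff' (Submodule.map_subtype_top _),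
    LinearMap.range_eq_top, ← LinearMap.dualMap_injective_iff, injective_iff_map_eq_zero]
  rfl

lemma eq_zero_of_forall_apply_derivedBracket_eq_zero (f : Module.Dual k (derivedIdeal k L))
    (hf : ∀ a b, f (derivedBracket k a b) = 0) : f = 0 := by
  have hle : (derivedIdeal k L).toSubmodule ≤
      (LinearMap.ker f).map (derivedIdeal k L).toSubmodule.subtype := by
    refine (LieSubmodule.lieIdeal_oper_eq_linear_span' _ _).le.trans (Submodule.span_le.mpr ?_)
    rintro _ ⟨a, -, b, -, rfl⟩
    exact ⟨derivedBracket k a b, hf a b, rfl⟩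
  ext z
  obtain ⟨z', hz', hzz'⟩ := hle z.2
  rwa [← Subtype.ext hzz']

variable (h : derivedIdeal k L ≤ LieAlgebra.center k L)
include h

lemma lie_eq_zero_of_mem_derivedIdeal_right {z : L} (hz : z ∈ derivedIdeal k L) (a : L) :
    ⁅a, z⁆ = 0 :=
  (LieModule.mem_maxTrivSubmodule k L L z).mp (h hz) a

lemma lie_eq_zero_of_mem_derivedIdeal_left {z : L} (hz : z ∈ derivedIdeal k L) (a : L) :
    ⁅z, a⁆ = 0 := by
  rw [← lie_skew, lie_eq_zero_of_mem_derivedIdeal_right h hz, neg_zero]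

lemma derivedBracket_eq_zero_of_mem {z : L} (hz : z ∈ derivedIdeal k L) :
    derivedBracket k z = 0 :=
  LinearMap.ext fun a => Subtype.ext (lie_eq_zero_of_mem_derivedIdeal_left h hz a)

lemma lieSpan_eq_top_of_span_sup_derivedIdeal_eq_top {s : Set L}
    (hs : Submodule.span k s ⊔ (derivedIdeal k L).toSubmodule = ⊤) :
    LieSubalgebra.lieSpan k L s = ⊤ := by
  set P := LieSubalgebra.lieSpan k L s
  have hsP : Submodule.span k s ≤ P.toSubmodule := LieSubalgebra.submodule_span_le_lieSpan
  have hDP : (derivedIdeal k L).toSubmodule ≤ P.toSubmodule := by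
    rw [LieSubmodule.lieIdeal_oper_eq_linear_span', Submodule.span_le]
    rintro _ ⟨a, -, b, -, rfl⟩
    obtain ⟨a₁, ha₁, a₂, ha₂, rfl⟩ :=
      Submodule.mem_sup.mp (hs.ge (Submodule.mem_top (x := a)))
    obtain ⟨b₁, hb₁, b₂, hb₂, rfl⟩ :=
      Submodule.mem_sup.mp (hs.ge (Submodule.mem_top (x := b)))
    rw [add_lie, lie_eq_zero_of_mem_derivedIdeal_left h ha₂, lie_add,
      lie_eq_zero_of_mem_derivedIdeal_right h hb₂, add_zero, add_zero]
    exact P.lie_mem (hsP ha₁) (hsP hb₁)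
  rw [← LieSubalgebra.toSubmodule_inj, LieSubalgebra.top_toSubmodule, eq_top_iff, ← hs]
  exact sup_le hsP hDP

end DerivedBracket

section Generators

variable {k : Type*} [Field k] {L : Type*} [LieRing L] [LieAlgebra k L] {ι : Type*}

variable (k) in
/-- The Gram matrix on `x` of the alternating form `f [·, ·]`; for `f` the `r`-th coordinate
function of a basis of `L'` it is the structure matrix `X_r`. -/
def bracketMatrix (x : ι → L) : Module.Dual k (derivedIdeal k L) →ₗ[k] Matrix ι ι k where
  toFun f := Matrix.of fun i j => f (derivedBracket k (x i) (x j))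
  map_add' _ _ := rfl
  map_smul' _ _ := rfl

@[simp]
lemma bracketMatrix_apply (x : ι → L) (f : Module.Dual k (derivedIdeal k L)) (i j : ι) :
    bracketMatrix k x f i j = f (derivedBracket k (x i) (x j)) :=
  rfl

lemma bracketMatrix_transpose (x : ι → L) (f : Module.Dual k (derivedIdeal k L)) :
    (bracketMatrix k x f)ᵀ = -bracketMatrix k x f := by
  ext i j
  simp [derivedBracket_swap (x j) (x i)]

lemma vecMul_bracketMatrix [Fintype ι] (x : ι → L) (f : Module.Dual k (derivedIdeal k L))
    (c : ι → k) :
    c ᵥ* bracketMatrix k x f = fun j => f (derivedBracket k (∑ i, c i • x i) (x j)) := by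
  ext j
  simp [Matrix.vecMul, dotProduct, map_sum, LinearMap.sum_apply]

variable {x : ι → L} (h : derivedIdeal k L ≤ LieAlgebra.center k L)
  (hS : Submodule.span k (Set.range x) ⊔ (derivedIdeal k L).toSubmodule = ⊤)
include h hS

lemma comp_derivedBracket_eq_zero_iff (f : Module.Dual k (derivedIdeal k L)) (a : L) :
    f ∘ₗ derivedBracket k a = 0 ↔ ∀ j, f (derivedBracket k a (x j)) = 0 := by
  refine ⟨fun hf j => LinearMap.congr_fun hf (x j), fun hf => ?_⟩
  rw [← LinearMap.ker_eq_top, eq_top_iff, ← hS]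
  refine sup_le (Submodule.span_le.mpr (Set.range_subset_iff.mpr hf)) fun z hz => ?_
  have : derivedBracket k a z = 0 := Subtype.ext (lie_eq_zero_of_mem_derivedIdeal_right h hz a)
  simp [this]

lemma bracketMatrix_injective : Function.Injective (bracketMatrix k x) := by
  rw [injective_iff_map_eq_zero]
  intro f hf
  have hgen : ∀ i, f ∘ₗ derivedBracket k (x i) = 0 := fun i =>
    (comp_derivedBracket_eq_zero_iff h hS f _).mpr fun j => congr_fun₂ hf i j
  have hall : ∀ a, f ∘ₗ derivedBracket k a = 0 := fun a =>
    (comp_derivedBracket_eq_zero_iff h hS f a).mpr fun j => by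
      rw [derivedBracket_swap, map_neg, ← LinearMap.comp_apply, hgen j, LinearMap.zero_apply,
        neg_zero]
  exact eq_zero_of_forall_apply_derivedBracket_eq_zero f fun a b => LinearMap.congr_fun (hall a) b

end Generators

section Camina

variable {k : Type*} [Field k] {L : Type*} [LieRing L] [LieAlgebra k L]

lemma MinimallyGenerated.eq_zero_of_sum_smul_mem_derivedIdeal {n : ℕ}
    (hmin : MinimallyGenerated k L n) (h : derivedIdeal k L ≤ LieAlgebra.center k L)
    {x : Fin n → L} (hS : Submodule.span k (Set.range x) ⊔ (derivedIdeal k L).toSubmodule = ⊤)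
    {c : Fin n → k} (hc : ∑ i, c i • x i ∈ derivedIdeal k L) : c = 0 := by
  classical
  by_contra hc0
  obtain ⟨j, hj⟩ : ∃ j, c j ≠ 0 := Function.ne_iff.mp hc0
  set s := (Finset.univ.erase j).image x
  set V := Submodule.span k (s : Set L) ⊔ (derivedIdeal k L).toSubmodule
  have hs : ∀ i ≠ j, x i ∈ V := fun i hi =>
    Submodule.mem_sup_left (Submodule.subset_span (Finset.mem_image_of_mem x (by simp [hi])))
  have hxj : x j ∈ V := by
    have hsum : c j • x j = ∑ i, c i • x i - ∑ i ∈ Finset.univ.erase j, c i • x i := by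
      rw [← Finset.add_sum_erase _ _ (Finset.mem_univ j), add_sub_cancel_right]
    have : c j • x j ∈ V := hsum ▸ sub_mem (Submodule.mem_sup_right hc)
      (sum_mem fun i hi => V.smul_mem _ (hs i (Finset.ne_of_mem_erase hi)))
    simpa [hj] using V.smul_mem (c j)⁻¹ this
  have hV : V = ⊤ := by
    refine eq_top_iff.mpr (hS ▸ sup_le (Submodule.span_le.mpr ?_) le_sup_right)
    exact Set.range_subset_iff.mpr fun i => if hi : i = j then hi ▸ hxj else hs i hi
  have hn := hmin.2 s (lieSpan_eq_top_of_span_sup_derivedIdeal_eq_top h hV)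
  have hs_card : s.card ≤ n - 1 := Finset.card_image_le.trans (by simp)
  have hn_pos : 0 < n := j.pos
  omega

theorem isCamina_iff_forall_det_bracketMatrix_ne_zero {ι : Type*} [Fintype ι] [DecidableEq ι]
    {x : ι → L} (h : derivedIdeal k L ≤ LieAlgebra.center k L)
    (hS : Submodule.span k (Set.range x) ⊔ (derivedIdeal k L).toSubmodule = ⊤)
    (hind : ∀ c : ι → k, ∑ i, c i • x i ∈ derivedIdeal k L → c = 0) :
    IsCamina k L ↔
      ∀ f : Module.Dual k (derivedIdeal k L), f ≠ 0 → (bracketMatrix k x f).det ≠ 0 := by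
  constructor
  · intro hcam f hf hdet
    obtain ⟨c, hc, hcf⟩ := Matrix.exists_vecMul_eq_zero_iff.mpr hdet
    have ha : ∑ i, c i • x i ∉ derivedIdeal k L := fun hmem => hc (hind c hmem)
    refine hf ((range_ad_eq_derivedIdeal_iff _).mp (hcam _ ha) f ?_)
    rw [comp_derivedBracket_eq_zero_iff h hS]
    simpa [vecMul_bracketMatrix, funext_iff] using hcf
  · intro hdet a ha
    obtain ⟨v, hv, z, hz, rfl⟩ := Submodule.mem_sup.mp (hS.ge (Submodule.mem_top (x := a)))
    obtain ⟨c, rfl⟩ := (Submodule.mem_span_range_iff_exists_fun k).mp hv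
    have hc : c ≠ 0 := by
      rintro rfl
      simp only [Pi.zero_apply, zero_smul, Finset.sum_const_zero, zero_add] at ha
      exact ha hz
    rw [range_ad_eq_derivedIdeal_iff]
    intro f hf
    by_contra hf0
    rw [map_add, derivedBracket_eq_zero_of_mem h hz, add_zero] at hf
    refine hdet f hf0 (Matrix.exists_vecMul_eq_zero_iff.mp ⟨c, hc, ?_⟩)
    rw [vecMul_bracketMatrix]
    exact funext fun j => LinearMap.congr_fun hf (x j)

end Camina

section Matrices

variable {k : Type*} [Field k] {V : Type*} [AddCommGroup V] [Module k V]
  {n : Type*} [Fintype n] [DecidableEq n]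

lemma Module.Basis.forall_det_sum_smul_eq_zero_imp_iff {κ : Type*} [Fintype κ] (b : Basis κ k V)
    (B : V →ₗ[k] Matrix n n k) :
    (∀ ξ : κ → k, (∑ r, ξ r • B (b r)).det = 0 → ξ = 0) ↔
      ∀ v, v ≠ 0 → (B v).det ≠ 0 := by
  simp_rw [← map_smul, ← map_sum, ← b.equivFun_symm_apply]
  constructor
  · intro H v hv hdet
    exact hv (b.equivFun.map_eq_zero_iff.mp (H _ (by rwa [LinearEquiv.symm_apply_apply])))
  · intro H ξ hdet
    by_contra hξ
    exact H _ (b.equivFun.symm.map_ne_zero_iff.mpr hξ) hdet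

lemma forall_mem_range_isUnit_iff {B : V →ₗ[k] Matrix n n k} (hB : Function.Injective B) :
    (∀ A ∈ LinearMap.range B, A ≠ 0 → IsUnit A) ↔ ∀ v, v ≠ 0 → (B v).det ≠ 0 := by
  simp only [LinearMap.mem_range, forall_exists_index, forall_apply_eq_imp_iff,
    Matrix.isUnit_iff_isUnit_det, isUnit_iff_ne_zero, ne_eq, (injective_iff_map_eq_zero' B).mp hB]

end Matrices

theorem camina_iff_structure_matrices_general
    (k : Type*) [Field k] (L : Type*) [LieRing L] [LieAlgebra k L]
    (n m : ℕ)
    (x : Fin n → L) (hgen : LieSubalgebra.lieSpan k L (Set.range x) = ⊤)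
    (hmin : MinimallyGenerated k L n)
    (hZ : LieAlgebra.center k L = derivedIdeal k L)
    (y : Basis (Fin m) k (derivedIdeal k L))
    (X : Fin m → Matrix (Fin n) (Fin n) k)
    (hX : ∀ r i j, X r i j = y.repr ⟨⁅x i, x j⁆, lie_mem_derivedIdeal k L (x i) (x j)⟩ r) :
    (∀ r, (X r)ᵀ = -(X r)) ∧
    (IsCamina k L ↔ ∀ ξ : Fin m → k, (∑ r, ξ r • X r).det = 0 → ξ = 0) ∧
    (IsCamina k L ↔
      (finrank k (Submodule.span k (Set.range X)) = m ∧
       (∀ A ∈ Submodule.span k (Set.range X), Aᵀ = -A) ∧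
       (∀ A ∈ Submodule.span k (Set.range X), A ≠ 0 → IsUnit A))) := by
  have h : derivedIdeal k L ≤ LieAlgebra.center k L := hZ.ge
  have hS := span_sup_derivedIdeal_eq_top hgen
  have hcam := isCamina_iff_forall_det_bracketMatrix_ne_zero h hS
    fun c => hmin.eq_zero_of_sum_smul_mem_derivedIdeal h hS
  have hinj := bracketMatrix_injective h hS
  obtain rfl : X = bracketMatrix k x ∘ y.dualBasis :=
    funext fun r => Matrix.ext fun i j => (hX r i j).trans (y.dualBasis_apply r _).symm
  have hspan : Submodule.span k (Set.range (bracketMatrix k x ∘ y.dualBasis)) =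
      LinearMap.range (bracketMatrix k x) := by
    rw [Set.range_comp, ← Submodule.map_span, y.dualBasis.span_eq, Submodule.map_top]
  have hfinrank : finrank k (LinearMap.range (bracketMatrix k x)) = m := by
    rw [LinearMap.finrank_range_of_inj hinj, finrank_eq_card_basis y.dualBasis, Fintype.card_fin]
  have hskew : ∀ A ∈ LinearMap.range (bracketMatrix k x), Aᵀ = -A := by
    rintro _ ⟨f, rfl⟩
    exact bracketMatrix_transpose x f
  refine ⟨fun r => bracketMatrix_transpose x _,
    hcam.trans (y.dualBasis.forall_det_sum_smul_eq_zero_imp_iff _).symm, hcam.trans ?_⟩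
  rw [hspan, and_iff_right hfinrank, and_iff_right hskew, forall_mem_range_isUnit_iff hinj]

/-- structure-constant criterion for Camina Lie algebras. If `L` is minimally
generated by `x_1, …, x_n`, `Z(L) = L'` has dimension `m` with basis `y_1, …, y_m`, and
`X_r` is the matrix with `(i,j)` entry `γ_{ijr}` where `[x_i, x_j] = Σ_r γ_{ijr} y_r`, then
each `X_r` is skew-symmetric, and `L` is Camina iff every nontrivial linear combination of
the `X_r` is nonsingular, iff the span of the `X_r` is an `m`-dimensional rank-`n` subspace
of `M_n(k)` consisting of skew-symmetric matrices. -/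
theorem camina_iff_structure_matrices
    (k : Type*) [Field k] (L : Type*) [LieRing L] [LieAlgebra k L] [FiniteDimensional k L]
    (n m : ℕ)
    (x : Fin n → L) (hgen : LieSubalgebra.lieSpan k L (Set.range x) = ⊤)
    (hmin : MinimallyGenerated k L n)
    (hZ : LieAlgebra.center k L = derivedIdeal k L)
    (hdim : finrank k (derivedIdeal k L) = m)
    (y : Basis (Fin m) k (derivedIdeal k L))
    (X : Fin m → Matrix (Fin n) (Fin n) k)
    (hX : ∀ r i j, X r i j = y.repr ⟨⁅x i, x j⁆, lie_mem_derivedIdeal k L (x i) (x j)⟩ r) :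
    (∀ r, (X r)ᵀ = -(X r)) ∧
    (IsCamina k L ↔ ∀ ξ : Fin m → k, (∑ r, ξ r • X r).det = 0 → ξ = 0) ∧
    (IsCamina k L ↔
      (finrank k (Submodule.span k (Set.range X)) = m ∧
       (∀ A ∈ Submodule.span k (Set.range X), Aᵀ = -A) ∧
       (∀ A ∈ Submodule.span k (Set.range X), A ≠ 0 → IsUnit A))) :=
  camina_iff_structure_matrices_general k L n m x hgen hmin hZ y X hX
end

section
/- Let L be a 2-step nilpotent Camina Lie algebra over an algebraically closed field k. Then the derived subalgebra L' has dimension 1; in particular, L has breadth type (0,1). -/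
/- Common definitions: breadth, breadth type, derived subalgebra, Camina Lie algebras,
nilpotency class, minimal generation, and free nilpotent Lie algebras. -/

open Module

/-! In a 2-step nilpotent Lie algebra `L'` is central. For a functional `ν` on `L'`, the Camina
property makes the form `B_ν = ν ∘ [·, ·]` nondegenerate on a complement `C` of `L'` whenever
`ν ≠ 0`. If `λ, μ` were independent functionals, an eigenvalue `t` of `B_μ⁻¹ ∘ B_λ`
(over the algebraically closed `k`) would make `B_{λ - t μ}` degenerate, so `dim L' = 1`.
By the Camina property every `x ∉ L'` then has breadth `dim [x, L] = dim L' = 1`. -/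

section PencilOfForms

variable {k V W : Type*} [Field k] [IsAlgClosed k] [AddCommGroup V] [Module k V]
  [FiniteDimensional k V] [Nontrivial V] [AddCommGroup W] [Module k W]

theorem LinearMap.exists_ne_zero_apply_eq_smul_apply {U : Type*} [AddCommGroup U] [Module k U]
    [FiniteDimensional k U] (hdim : finrank k V = finrank k U) (f : V →ₗ[k] U)
    {g : V →ₗ[k] U} (hg : Function.Injective g) :
    ∃ t : k, ∃ v ≠ 0, f v = t • g v := by
  let e := g.linearEquivOfInjective hg hdim
  obtain ⟨t, ht⟩ := Module.End.exists_eigenvalue (e.symm.toLinearMap ∘ₗ f)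
  obtain ⟨v, hv⟩ := ht.exists_hasEigenvector
  refine ⟨t, v, hv.2, ?_⟩
  simpa [e] using congrArg e hv.apply_eq_smul

theorem finrank_le_one_of_forall_injective_compr₂ (β : V →ₗ[k] V →ₗ[k] W)
    (hβ : ∀ ν : Dual k W, ν ≠ 0 → Function.Injective (β.compr₂ ν)) :
    finrank k W ≤ 1 := by
  rw [← Subspace.dual_finrank_eq]
  rcases subsingleton_or_nontrivial (Dual k W) with hW | hW
  · simp [finrank_zero_of_subsingleton]
  obtain ⟨ν₀, hν₀⟩ := exists_ne (0 : Dual k W)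
  refine finrank_le_one ν₀ fun ν => ?_
  obtain ⟨t, v, hv, hfg⟩ := LinearMap.exists_ne_zero_apply_eq_smul_apply
    (Subspace.dual_finrank_eq).symm (β.compr₂ ν) (hβ ν₀ hν₀)
  refine ⟨t, ?_⟩
  by_contra hne
  have hker : β.compr₂ (ν - t • ν₀) v = 0 := by
    ext w
    simpa [sub_eq_zero] using LinearMap.congr_fun hfg w
  exact hv (hβ _ (sub_ne_zero.mpr (Ne.symm hne)) (hker.trans (map_zero _).symm))

end PencilOfForms

section CaminaLieAlgebra

variable {k L : Type*} [Field k] [LieRing L] [LieAlgebra k L]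

theorem lowerCentralSeries_one_eq_derivedIdeal :
    LieModule.lowerCentralSeries k L L 1 = derivedIdeal k L :=
  rfl

theorem derivedIdeal_ne_bot (h2 : IsNilpotentOfClass k L 2) : derivedIdeal k L ≠ ⊥ :=
  h2.2 1 one_lt_two

theorem derivedIdeal_ne_top (h2 : IsNilpotentOfClass k L 2) : derivedIdeal k L ≠ ⊤ := by
  intro htop
  have hlcs : LieModule.lowerCentralSeries k L L 2 = ⊤ := by
    rw [LieModule.lowerCentralSeries_succ, lowerCentralSeries_one_eq_derivedIdeal, htop]
    exact htop
  exact h2.2 0 two_pos (LieModule.lowerCentralSeries_zero k L L ▸ hlcs ▸ h2.1)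

variable (k L) in
def lieToDerivedIdeal : L →ₗ[k] L →ₗ[k] derivedIdeal k L :=
  LinearMap.mk₂ k (fun a b => ⟨⁅a, b⁆, lie_mem_derivedIdeal k L a b⟩)
    (fun a a' b => Subtype.ext (add_lie a a' b)) (fun c a b => Subtype.ext (smul_lie c a b))
    (fun a b b' => Subtype.ext (lie_add a b b')) (fun c a b => Subtype.ext (lie_smul c a b))

@[simp]
theorem coe_lieToDerivedIdeal_apply (a b : L) : (lieToDerivedIdeal k L a b : L) = ⁅a, b⁆ :=
  rfl

theorem derivedIdeal_le_center (h2 : IsNilpotentOfClass k L 2) :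
    derivedIdeal k L ≤ LieAlgebra.center k L := fun z hz =>
  (LieModule.mem_maxTrivSubmodule k L L z).mpr fun x =>
    (LieSubmodule.lie_eq_bot_iff _ _).mp h2.1 x (LieSubmodule.mem_top x) z hz

theorem ad_eq_zero_of_mem_derivedIdeal (hcen : derivedIdeal k L ≤ LieAlgebra.center k L)
    {x : L} (hx : x ∈ derivedIdeal k L) : LieAlgebra.ad k L x = 0 := by
  ext u
  rw [LieAlgebra.ad_apply, LinearMap.zero_apply, ← lie_skew,
    (LieModule.mem_maxTrivSubmodule k L L x).mp (hcen hx) u, neg_zero]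

theorem breadth_eq_zero_of_mem_derivedIdeal (hcen : derivedIdeal k L ≤ LieAlgebra.center k L)
    {x : L} (hx : x ∈ derivedIdeal k L) : breadth k L x = 0 := by
  rw [breadth, ad_eq_zero_of_mem_derivedIdeal hcen hx, LinearMap.range_zero, finrank_bot]

theorem IsCamina.breadth_eq_finrank (hC : IsCamina k L) {x : L} (hx : x ∉ derivedIdeal k L) :
    breadth k L x = finrank k (derivedIdeal k L) := by
  rw [breadth, hC x hx]
  rfl

theorem IsCamina.hasBreadthType (hcen : derivedIdeal k L ≤ LieAlgebra.center k L)
    (hC : IsCamina k L) (htop : derivedIdeal k L ≠ ⊤) :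
    HasBreadthType k L {0, finrank k (derivedIdeal k L)} := by
  obtain ⟨y, hy⟩ : ∃ y, y ∉ derivedIdeal k L := by
    by_contra! h
    exact htop (eq_top_iff.mpr fun y _ => h y)
  ext m
  constructor
  · rintro ⟨x, rfl⟩
    by_cases hx : x ∈ derivedIdeal k L
    · exact Or.inl (breadth_eq_zero_of_mem_derivedIdeal hcen hx)
    · exact Or.inr (hC.breadth_eq_finrank hx)
  · rintro (rfl | rfl)
    · exact ⟨0, breadth_eq_zero_of_mem_derivedIdeal hcen (zero_mem _)⟩
    · exact ⟨y, hC.breadth_eq_finrank hy⟩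

theorem IsCamina.injective_compr₂_domRestrict₁₂
    (hcen : derivedIdeal k L ≤ LieAlgebra.center k L) (hC : IsCamina k L)
    {C : Submodule k L} (hCompl : IsCompl C (derivedIdeal k L).toSubmodule)
    {ν : Dual k (derivedIdeal k L)} (hν : ν ≠ 0) :
    Function.Injective (((lieToDerivedIdeal k L).domRestrict₁₂ C C).compr₂ ν) := by
  rw [injective_iff_map_eq_zero]
  intro c hc
  by_contra hc0
  have hcL' : (c : L) ∉ derivedIdeal k L := fun h =>
    hc0 (Subtype.ext (Submodule.disjoint_def.mp hCompl.disjoint c c.2 h))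
  apply hν
  ext w
  obtain ⟨u, hu⟩ : (w : L) ∈ LinearMap.range (LieAlgebra.ad k L (c : L)) :=
    (hC c hcL').symm ▸ w.2
  obtain ⟨c', hc', z, hz, rfl⟩ :=
    Submodule.mem_sup.mp (hCompl.sup_eq_top.symm ▸ Submodule.mem_top : u ∈ C ⊔ _)
  have hw : w = lieToDerivedIdeal k L c c' := by
    ext
    rw [← hu, coe_lieToDerivedIdeal_apply, LieAlgebra.ad_apply, lie_add,
      (LieModule.mem_maxTrivSubmodule k L L z).mp (hcen hz) c, add_zero]
  rw [hw, LinearMap.zero_apply]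
  exact LinearMap.congr_fun hc ⟨c', hc'⟩

theorem IsCamina.finrank_derivedIdeal_le_one [IsAlgClosed k] [FiniteDimensional k L]
    (hcen : derivedIdeal k L ≤ LieAlgebra.center k L) (hC : IsCamina k L)
    (htop : derivedIdeal k L ≠ ⊤) : finrank k (derivedIdeal k L) ≤ 1 := by
  obtain ⟨C, hCompl⟩ := Submodule.exists_isCompl (derivedIdeal k L).toSubmodule
  have : Nontrivial C := Submodule.nontrivial_iff_ne_bot.mpr fun hbot =>
    htop ((LieSubmodule.toSubmodule_eq_top _).mp (eq_top_of_isCompl_bot (hbot ▸ hCompl)))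
  exact finrank_le_one_of_forall_injective_compr₂ _ fun ν hν =>
    hC.injective_compr₂_domRestrict₁₂ hcen hCompl.symm hν

end CaminaLieAlgebra

/-- a 2-step nilpotent Camina Lie algebra over an algebraically closed field
has 1-dimensional derived subalgebra; in particular, it has breadth type `(0,1)`. -/
theorem camina_alg_closed_derived_dim_one
    (k : Type*) [Field k] [IsAlgClosed k]
    (L : Type*) [LieRing L] [LieAlgebra k L] [FiniteDimensional k L]
    (h2 : IsNilpotentOfClass k L 2) (hC : IsCamina k L) :
    finrank k (derivedIdeal k L) = 1 ∧ HasBreadthType k L {0, 1} := by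
  have hcen := derivedIdeal_le_center h2
  have hdim : finrank k (derivedIdeal k L) = 1 :=
    le_antisymm (hC.finrank_derivedIdeal_le_one hcen (derivedIdeal_ne_top h2))
      (Submodule.one_le_finrank_iff.mpr fun h =>
        derivedIdeal_ne_bot h2 ((LieSubmodule.toSubmodule_eq_bot _).mp h))
  exact ⟨hdim, hdim ▸ hC.hasBreadthType hcen (derivedIdeal_ne_top h2)⟩
end

section
/- Let k be a field and suppose V is a rank-n subspace of M_n(k) with dim V = r. Then there exists a rank-2n subspace W of the space of 2n×2n skew-symmetric matrices over k with dim W = r. Explicitly, if V is spanned by X_1, ..., X_r, then W may be taken to be the span of the block matrices Y_i = [[0, -X_iᵗ],[X_i, 0]] for 1 ≤ i ≤ r. -/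
/- Common definitions: breadth, breadth type, derived subalgebra, Camina Lie algebras,
nilpotency class, minimal generation, and free nilpotent Lie algebras. -/

open Module Matrix

/-- A subspace `V` of square matrices is a full-rank subspace if every nonzero element of
`V` is invertible. -/
def IsFullRankSubspace (k : Type*) [Field k] (ι : Type*) [Fintype ι] [DecidableEq ι]
    (V : Submodule k (Matrix ι ι k)) : Prop :=
  ∀ A ∈ V, A ≠ 0 → IsUnit A

noncomputable def doublingMap (k : Type*) [Field k] (n : ℕ) :
    Matrix (Fin n) (Fin n) k →ₗ[k] Matrix (Fin n ⊕ Fin n) (Fin n ⊕ Fin n) k where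
  toFun M := Matrix.fromBlocks 0 (-Mᵀ) M 0
  map_add' M N := by
    have h : -(M+N)ᵀ = -Mᵀ + -Nᵀ := by rw [Matrix.transpose_add]; abel
    simp [Matrix.fromBlocks_add, h]; abel
  map_smul' c M := by
    rw [RingHom.id_apply, Matrix.fromBlocks_smul]
    simp

theorem doubling_inj (k : Type*) [Field k] (n : ℕ) :
    Function.Injective (doublingMap k n) := by
  intro M N h
  have := congrArg Matrix.toBlocks₂₁ h
  simpa [doublingMap, Matrix.toBlocks_fromBlocks₂₁] using this

theorem doubling_unit (k : Type*) [Field k] (n : ℕ) (M : Matrix (Fin n) (Fin n) k)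
    (hM : IsUnit M) : IsUnit (doublingMap k n M) := by
  have hMt : IsUnit Mᵀ := (Matrix.isUnit_transpose M).mpr hM
  have h1 : M * M⁻¹ = 1 := Matrix.mul_nonsing_inv M (Matrix.isUnit_iff_isUnit_det M |>.mp hM)
  have h2 : Mᵀ * Mᵀ⁻¹ = 1 := Matrix.mul_nonsing_inv Mᵀ (Matrix.isUnit_iff_isUnit_det Mᵀ |>.mp hMt)
  have hmul : (doublingMap k n M) * Matrix.fromBlocks 0 M⁻¹ (-(Mᵀ⁻¹)) 0 = 1 := by
    show Matrix.fromBlocks 0 (-Mᵀ) M 0 * _ = 1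
    rw [Matrix.fromBlocks_multiply]
    simp [h1, h2, ← Matrix.fromBlocks_one]
  exact @isUnit_of_invertible _ _ _ (invertibleOfRightInverse _ _ hmul)

theorem doubling_skew (k : Type*) [Field k] (n : ℕ) (M : Matrix (Fin n) (Fin n) k) :
    (doublingMap k n M)ᵀ = -(doublingMap k n M) := by
  show (Matrix.fromBlocks 0 (-Mᵀ) M 0)ᵀ = -(Matrix.fromBlocks 0 (-Mᵀ) M 0)
  rw [Matrix.fromBlocks_transpose, Matrix.fromBlocks_neg]
  simp

/-- from an `r`-dimensional rank-`n` subspace `V = span{X_1, …, X_r}` of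
`M_n(k)` one obtains an `r`-dimensional rank-`2n` subspace of skew-symmetric `2n × 2n`
matrices, spanned by the block matrices `Y_i = [[0, -X_iᵀ], [X_i, 0]]`. -/
theorem skew_symmetric_doubling
    (k : Type*) [Field k] (n r : ℕ)
    (V : Submodule k (Matrix (Fin n) (Fin n) k))
    (hV : IsFullRankSubspace k (Fin n) V) (hdim : finrank k V = r)
    (X : Fin r → Matrix (Fin n) (Fin n) k)
    (hspan : V = Submodule.span k (Set.range X))
    (Y : Fin r → Matrix (Fin n ⊕ Fin n) (Fin n ⊕ Fin n) k)
    (hY : ∀ i, Y i = Matrix.fromBlocks 0 (-(X i)ᵀ) (X i) 0) :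
    IsFullRankSubspace k (Fin n ⊕ Fin n) (Submodule.span k (Set.range Y)) ∧
    (∀ A ∈ Submodule.span k (Set.range Y), Aᵀ = -A) ∧
    finrank k (Submodule.span k (Set.range Y)) = r := by
  have hspan2 : Submodule.span k (Set.range Y) = Submodule.map (doublingMap k n) V := by
    rw [hspan, Submodule.map_span]
    congr 1
    rw [← Set.range_comp]
    exact congrArg Set.range (funext fun i => hY i)
  refine ⟨?_, ?_, ?_⟩
  · intro A hA hA0
    rw [hspan2] at hA
    obtain ⟨M, hM, rfl⟩ := hA
    have hMne : M ≠ 0 := by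
      rintro rfl
      exact hA0 (map_zero _)
    exact doubling_unit k n M (hV M hM hMne)
  · intro A hA
    rw [hspan2] at hA
    obtain ⟨M, hM, rfl⟩ := hA
    exact doubling_skew k n M
  · rw [hspan2, ← hdim]
    exact (LinearEquiv.finrank_eq
      (Submodule.equivMapOfInjective _ (doubling_inj k n) V)).symm
end

section
/- Let k be a field in which -1 is not a sum of two squares, and let ℒ_3 be the free 2-step nilpotent Lie algebra over k on generators x_1, x_2, x_3, x_4. Let I be the 3-dimensional central ideal of ℒ_3 spanned by [x_1,x_2] + [x_3,x_4], [x_1,x_3] - [x_2,x_4], and [x_1,x_4] + [x_2,x_3]. Then ℒ_3/I is a 2-step nilpotent Camina Lie algebra over k, minimally generated by 4 elements, of breadth type (0,3). In particular, over any such field there exists a 4-generated 2-step nilpotent Camina Lie algebra of breadth type (0,3). -/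
/- Common definitions: breadth, breadth type, derived subalgebra, Camina Lie algebras,
nilpotency class, minimal generation, and free nilpotent Lie algebras. -/

open Module

/-- The 3-dimensional central ideal of `ℒ₃` spanned by `[x₁,x₂] + [x₃,x₄]`,
`[x₁,x₃] - [x₂,x₄]` and `[x₁,x₄] + [x₂,x₃]`. -/
noncomputable def idealK (k : Type*) [Field k] : LieIdeal k (FreeNilp k 2 4) :=
  LieSubmodule.lieSpan k (FreeNilp k 2 4)
    {⁅gen k 2 4 0, gen k 2 4 1⁆ + ⁅gen k 2 4 2, gen k 2 4 3⁆,
     ⁅gen k 2 4 0, gen k 2 4 2⁆ - ⁅gen k 2 4 1, gen k 2 4 3⁆,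
     ⁅gen k 2 4 0, gen k 2 4 3⁆ + ⁅gen k 2 4 1, gen k 2 4 2⁆}

/-!
Sending `x₁, x₂, x₃, x₄` to the quaternion units `1, i, j, k` identifies `ℒ₃/I` with `ℍ ⊕ k³`,
where `k³` is central and `⁅a, b⁆ = Im (ā b)` for quaternions `a, b`: the three relations
spanning `I` are exactly the linear relations among the `Im (ā b)` for `a, b ∈ {1, i, j, k}`.
If `-1` is not a sum of two squares, the norm form `N(a) = ā a = a₀² + a₁² + a₂² + a₃²` is
anisotropic, so for `a ≠ 0` the map `b ↦ Im (ā b)` is onto `k³` (take `b = a q / N(a)`).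
Hence the derived algebra is the centre `k³`, every `x` outside it has `[x, L] = k³` of
dimension `3`, and a generating set must span `L / L' ≅ ℍ`, so has at least `4` elements.
-/

lemma LinearMap.ext_basis_of_isAlt {R M N ι : Type*} [CommRing R] [AddCommGroup M] [Module R M]
    [AddCommGroup N] [Module R N] [LinearOrder ι] (b : Basis ι R M) {B B' : M →ₗ[R] M →ₗ[R] N}
    (hB : B.IsAlt) (hB' : B'.IsAlt) (h : ∀ i j, i < j → B (b i) (b j) = B' (b i) (b j)) :
    B = B' := by
  refine LinearMap.ext_basis b b fun i j => ?_
  rcases lt_trichotomy i j with hij | rfl | hij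
  · exact h i j hij
  · rw [hB.self_eq_zero, hB'.self_eq_zero]
  · rw [← hB.neg, ← hB'.neg, h j i hij]

section LowerCentralSeries

open LieModule

variable {R L L' : Type*} [CommRing R] [LieRing L] [LieAlgebra R L] [LieRing L'] [LieAlgebra R L']

lemma lie_lie_mem_lowerCentralSeries_two (x y z : L) :
    ⁅x, ⁅y, z⁆⁆ ∈ lowerCentralSeries R L L 2 :=
  LieSubmodule.lie_mem_lie (LieSubmodule.mem_top x)
    (LieSubmodule.lie_mem_lie (LieSubmodule.mem_top y) (LieSubmodule.mem_top z))

lemma lowerCentralSeries_two_eq_bot (h : ∀ x y z : L, ⁅x, ⁅y, z⁆⁆ = 0) :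
    lowerCentralSeries R L L 2 = ⊥ := by
  have h₁ : lowerCentralSeries R L L 1 ≤ maxTrivSubmodule R L L := by
    rw [lowerCentralSeries_succ, lowerCentralSeries_zero, LieSubmodule.lie_le_iff]
    exact fun y _ z _ => (mem_maxTrivSubmodule R L L _).mpr fun x => h x y z
  rw [lowerCentralSeries_succ, ← le_bot_iff,
    ← ideal_oper_maxTrivSubmodule_eq_bot R L L ⊤]
  exact LieSubmodule.mono_lie_right ⊤ h₁

lemma lowerCentralSeries_le_ker (f : L →ₗ⁅R⁆ L') {n : ℕ}
    (h : lowerCentralSeries R L' L' n = ⊥) : lowerCentralSeries R L L n ≤ f.ker := by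
  rw [← LieIdeal.map_eq_bot_iff, ← le_bot_iff, ← h]
  exact LieIdeal.map_lowerCentralSeries_le n

end LowerCentralSeries

namespace LieIdeal

variable {R L L' : Type*} [CommRing R] [LieRing L] [LieAlgebra R L] [LieRing L'] [LieAlgebra R L']
  (I : LieIdeal R L)

def mkQ : L →ₗ⁅R⁆ L ⧸ I :=
  { (LieSubmodule.Quotient.mk' I : L →ₗ[R] L ⧸ I) with map_lie' := rfl }

lemma mkQ_surjective : Function.Surjective I.mkQ :=
  LieSubmodule.Quotient.surjective_mk' I

lemma mkQ_eq_zero {x : L} : I.mkQ x = 0 ↔ x ∈ I :=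
  LieSubmodule.Quotient.mk_eq_zero'

def liftQ (f : L →ₗ⁅R⁆ L') (hf : I ≤ f.ker) : L ⧸ I →ₗ⁅R⁆ L' :=
  { I.toSubmodule.liftQ (f : L →ₗ[R] L') (fun _ hx => hf hx) with
    map_lie' := by
      rintro ⟨x⟩ ⟨y⟩
      exact f.map_lie x y }

end LieIdeal

/-- `V × W` with the bracket `⁅(v, w), (v', w')⁆ = (0, β v v')`. -/
def TwoStep {R V W : Type*} [CommRing R] [AddCommGroup V] [Module R V] [AddCommGroup W]
    [Module R W] (β : V →ₗ[R] V →ₗ[R] W) (_ : β.IsAlt) : Type _ :=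
  V × W

namespace TwoStep

section CommRing

variable {R V W : Type*} [CommRing R] [AddCommGroup V] [Module R V] [AddCommGroup W] [Module R W]
  {β : V →ₗ[R] V →ₗ[R] W} {hβ : β.IsAlt}

instance : AddCommGroup (TwoStep β hβ) := inferInstanceAs (AddCommGroup (V × W))

instance : Module R (TwoStep β hβ) := inferInstanceAs (Module R (V × W))

variable (β hβ)

def fst : TwoStep β hβ →ₗ[R] V := LinearMap.fst R V W

def snd : TwoStep β hβ →ₗ[R] W := LinearMap.snd R V W

def inl : V →ₗ[R] TwoStep β hβ := LinearMap.inl R V W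

def inr : W →ₗ[R] TwoStep β hβ := LinearMap.inr R V W

variable {β hβ}

@[simp] lemma fst_inr (w : W) : fst β hβ (inr β hβ w) = 0 := rfl

@[simp] lemma snd_inr (w : W) : snd β hβ (inr β hβ w) = w := rfl

lemma inl_fst_add_inr_snd (x : TwoStep β hβ) :
    inl β hβ (fst β hβ x) + inr β hβ (snd β hβ x) = x :=
  Prod.fst_add_snd x

lemma inr_injective : Function.Injective (inr β hβ) := LinearMap.inr_injective

lemma ker_fst : LinearMap.ker (fst β hβ) = LinearMap.range (inr β hβ) := LinearMap.ker_fst R V W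

instance : LieRing (TwoStep β hβ) where
  bracket x y := inr β hβ (β (fst β hβ x) (fst β hβ y))
  add_lie x y z := by simp only [map_add, LinearMap.add_apply]
  lie_add x y z := by simp only [map_add]
  lie_self x := by simp only [hβ.self_eq_zero, map_zero]
  leibniz_lie x y z := by simp only [fst_inr, map_zero, LinearMap.zero_apply, add_zero]

lemma lie_def (x y : TwoStep β hβ) : ⁅x, y⁆ = inr β hβ (β (fst β hβ x) (fst β hβ y)) := rfl

instance : LieAlgebra R (TwoStep β hβ) where
  lie_smul r x y := by simp only [lie_def, map_smul]

@[simp] lemma lie_inl_inl (v v' : V) : ⁅inl β hβ v, inl β hβ v'⁆ = inr β hβ (β v v') := rfl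

@[simp] lemma fst_lie (x y : TwoStep β hβ) : fst β hβ ⁅x, y⁆ = 0 := rfl

lemma lowerCentralSeries_two_eq_bot :
    LieModule.lowerCentralSeries R (TwoStep β hβ) (TwoStep β hβ) 2 = ⊥ :=
  _root_.lowerCentralSeries_two_eq_bot fun x y z => by simp [lie_def]

variable {L : Type*} [LieRing L] [LieAlgebra R L]

def lift (φ : V →ₗ[R] L) (ψ : W →ₗ[R] L) (hψ : ∀ w (x : L), ⁅ψ w, x⁆ = 0)
    (hφ : ∀ v v', ⁅φ v, φ v'⁆ = ψ (β v v')) : TwoStep β hβ →ₗ⁅R⁆ L :=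
  { φ ∘ₗ fst β hβ + ψ ∘ₗ snd β hβ with
    map_lie' := fun {x y} => by
      have hψ' : ∀ w x, ⁅x, ψ w⁆ = 0 := fun w x => by rw [← lie_skew, hψ, neg_zero]
      simp [lie_def, hφ, hψ, hψ'] }

@[simp] lemma lift_inl (φ : V →ₗ[R] L) (ψ : W →ₗ[R] L) (hψ : ∀ w (x : L), ⁅ψ w, x⁆ = 0)
    (hφ : ∀ v v', ⁅φ v, φ v'⁆ = ψ (β v v')) (v : V) : lift φ ψ hψ hφ (inl β hβ v) = φ v := by
  change φ v + ψ 0 = φ v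
  rw [map_zero, add_zero]

end CommRing

section Field

variable {k V W : Type*} [Field k] [AddCommGroup V] [Module k V] [AddCommGroup W] [Module k W]
  {β : V →ₗ[k] V →ₗ[k] W} {hβ : β.IsAlt}

lemma range_ad (x : TwoStep β hβ) :
    LinearMap.range (LieAlgebra.ad k (TwoStep β hβ) x) =
      (LinearMap.range (β (fst β hβ x))).map (inr β hβ) := by
  have hfst : LinearMap.range (fst β hβ) = ⊤ := LinearMap.range_eq_top.mpr LinearMap.fst_surjective
  have had : LieAlgebra.ad k (TwoStep β hβ) x = inr β hβ ∘ₗ β (fst β hβ x) ∘ₗ fst β hβ := by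
    ext y
    rfl
  rw [had, LinearMap.range_comp, LinearMap.range_comp_of_range_eq_top _ hfst]

lemma breadth_eq (x : TwoStep β hβ) :
    breadth k (TwoStep β hβ) x = finrank k (LinearMap.range (β (fst β hβ x))) := by
  rw [breadth, range_ad]
  exact (Submodule.equivMapOfInjective _ inr_injective _).finrank_eq.symm

lemma finrank_le_card_of_lieSpan_eq_top (s : Finset (TwoStep β hβ))
    (hs : LieSubalgebra.lieSpan k (TwoStep β hβ) s = ⊤) : finrank k V ≤ s.card := by
  classical
  let P : LieSubalgebra k (TwoStep β hβ) :=
    { (Submodule.span k (s.image (fst β hβ) : Set V)).comap (fst β hβ) with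
      lie_mem' := fun {x y} _ _ => by
        change fst β hβ ⁅x, y⁆ ∈ Submodule.span k (s.image (fst β hβ) : Set V)
        rw [fst_lie]
        exact zero_mem _ }
  have hP : LieSubalgebra.lieSpan k (TwoStep β hβ) s ≤ P :=
    LieSubalgebra.lieSpan_le.mpr fun x hx => Submodule.subset_span (by simpa using ⟨x, hx, rfl⟩)
  have hspan : Submodule.span k (s.image (fst β hβ) : Set V) = ⊤ := by
    refine eq_top_iff.mpr fun v _ => ?_
    exact hP (hs ▸ LieSubalgebra.mem_top (inl β hβ v))
  calc finrank k V = (s.image (fst β hβ) : Set V).finrank k := by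
        rw [Set.finrank, hspan, finrank_top]
    _ ≤ (s.image (fst β hβ)).card := finrank_span_finset_le_card _
    _ ≤ s.card := Finset.card_image_le

section Surjective

variable {v : V} (hv : Function.Surjective (β v))
include hv

lemma derivedIdeal_eq :
    (derivedIdeal k (TwoStep β hβ)).toSubmodule = LinearMap.range (inr β hβ) := by
  apply le_antisymm
  · rw [LieSubmodule.lieIdeal_oper_eq_linear_span, Submodule.span_le]
    rintro _ ⟨x, y, rfl⟩
    exact ⟨_, (lie_def (x : TwoStep β hβ) y).symm⟩
  · rintro _ ⟨w, rfl⟩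
    obtain ⟨v', rfl⟩ := hv w
    rw [← lie_inl_inl]
    exact lie_mem_derivedIdeal k _ _ _

lemma mem_derivedIdeal_iff (x : TwoStep β hβ) :
    x ∈ derivedIdeal k (TwoStep β hβ) ↔ fst β hβ x = 0 := by
  rw [← LieSubmodule.mem_toSubmodule, derivedIdeal_eq hv, ← ker_fst, LinearMap.mem_ker]

lemma isNilpotentOfClass_two [Nontrivial W] : IsNilpotentOfClass k (TwoStep β hβ) 2 := by
  refine ⟨lowerCentralSeries_two_eq_bot, fun n hn => ?_⟩
  obtain ⟨w, hw⟩ := exists_ne (0 : W)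
  have hw₁ : inr β hβ w ∈ LieModule.lowerCentralSeries k (TwoStep β hβ) (TwoStep β hβ) 1 := by
    rw [LieModule.lowerCentralSeries_succ, LieModule.lowerCentralSeries_zero,
      ← LieSubmodule.mem_toSubmodule, derivedIdeal_eq hv]
    exact ⟨w, rfl⟩
  have hwn := LieModule.antitone_lowerCentralSeries k _ _ (Nat.le_of_lt_succ hn) hw₁
  rw [Ne, LieSubmodule.eq_bot_iff]
  exact fun h => hw ((map_eq_zero_iff _ inr_injective).mp (h _ hwn))

lemma lieSpan_range_inl_comp_basis {ι : Type*} (b : Basis ι k V) :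
    LieSubalgebra.lieSpan k (TwoStep β hβ) (Set.range (inl β hβ ∘ b)) = ⊤ := by
  set S := LieSubalgebra.lieSpan k (TwoStep β hβ) (Set.range (inl β hβ ∘ b))
  have hinl (u : V) : inl β hβ u ∈ S := by
    have hb : Submodule.span k (Set.range b) ≤ S.toSubmodule.comap (inl β hβ) :=
      Submodule.span_le.mpr fun _ ⟨i, hi⟩ => LieSubalgebra.subset_lieSpan ⟨i, by simp [← hi]⟩
    rw [b.span_eq] at hb
    exact hb Submodule.mem_top
  have hinr (w : W) : inr β hβ w ∈ S := by
    obtain ⟨v', rfl⟩ := hv w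
    rw [← lie_inl_inl]
    exact S.lie_mem (hinl v) (hinl v')
  refine eq_top_iff.mpr fun x _ => ?_
  rw [← inl_fst_add_inr_snd x]
  exact add_mem (hinl _) (hinr _)

lemma minimallyGenerated [FiniteDimensional k V] :
    MinimallyGenerated k (TwoStep β hβ) (finrank k V) := by
  classical
  refine ⟨?_, finrank_le_card_of_lieSpan_eq_top⟩
  let b := Module.finBasis k V
  have hinj : Function.Injective (inl β hβ ∘ b) :=
    LinearMap.inl_injective.comp b.injective
  refine ⟨Finset.univ.image (inl β hβ ∘ b), ?_, ?_⟩
  · rw [Finset.card_image_of_injective _ hinj, Finset.card_univ, Fintype.card_fin]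
  · rw [Finset.coe_image, Finset.coe_univ, Set.image_univ]
    exact lieSpan_range_inl_comp_basis hv b

end Surjective

variable (hβ_surj : ∀ v ≠ 0, Function.Surjective (β v))
include hβ_surj

lemma isCamina [Nontrivial V] : IsCamina k (TwoStep β hβ) := by
  obtain ⟨v, hv⟩ := exists_ne (0 : V)
  intro x hx
  rw [mem_derivedIdeal_iff (hβ_surj v hv)] at hx
  rw [range_ad, LinearMap.range_eq_top.mpr (hβ_surj _ hx), Submodule.map_top,
    derivedIdeal_eq (hβ_surj v hv)]

lemma hasBreadthType [Nontrivial V] : HasBreadthType k (TwoStep β hβ) {0, finrank k W} := by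
  have hzero (x : TwoStep β hβ) (hx : fst β hβ x = 0) : breadth k _ x = 0 := by
    rw [breadth_eq, hx, map_zero, LinearMap.range_zero, finrank_bot]
  have hne (x : TwoStep β hβ) (hx : fst β hβ x ≠ 0) : breadth k _ x = finrank k W := by
    rw [breadth_eq, LinearMap.range_eq_top.mpr (hβ_surj _ hx), finrank_top]
  ext n
  constructor
  · rintro ⟨x, rfl⟩
    by_cases hx : fst β hβ x = 0
    exacts [Or.inl (hzero x hx), Or.inr (hne x hx)]
  · rintro (rfl | rfl)
    · exact ⟨0, hzero 0 (map_zero _)⟩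
    · obtain ⟨v, hv⟩ := exists_ne (0 : V)
      exact ⟨inl β hβ v, hne _ hv⟩

end Field

end TwoStep

namespace LieEquiv

variable {k L L' : Type*} [Field k] [LieRing L] [LieAlgebra k L] [LieRing L'] [LieAlgebra k L']
  (e : L ≃ₗ⁅k⁆ L')
include e

lemma range_ad_apply (x : L) :
    LinearMap.range (LieAlgebra.ad k L' (e x)) =
      (LinearMap.range (LieAlgebra.ad k L x)).map (e.toLinearEquiv : L →ₗ[k] L') := by
  have hcomm : LieAlgebra.ad k L' (e x) ∘ₗ e.toLinearEquiv =
      e.toLinearEquiv ∘ₗ LieAlgebra.ad k L x := by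
    ext y
    exact (e.map_lie x y).symm
  rw [← LinearMap.range_comp, ← hcomm,
    LinearMap.range_comp_of_range_eq_top _ (LinearEquiv.range _)]

lemma breadth_apply (x : L) : breadth k L' (e x) = breadth k L x := by
  rw [breadth, breadth, range_ad_apply, LinearEquiv.finrank_map_eq]

lemma map_derivedIdeal :
    (derivedIdeal k L).toSubmodule.map (e.toLinearEquiv : L →ₗ[k] L') =
      (derivedIdeal k L').toSubmodule := by
  have h := LieIdeal.lowerCentralSeries_map_eq 1 (f := e.toLieHom) e.surjective
  simp only [LieModule.lowerCentralSeries_succ, LieModule.lowerCentralSeries_zero] at h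
  unfold derivedIdeal
  rw [← h, LieIdeal.coe_map_of_surjective e.surjective]
  rfl

lemma lowerCentralSeries_eq_bot_iff (n : ℕ) :
    LieModule.lowerCentralSeries k L' L' n = ⊥ ↔ LieModule.lowerCentralSeries k L L n = ⊥ := by
  rw [← LieIdeal.lowerCentralSeries_map_eq n (f := e.toLieHom) e.surjective,
    LieIdeal.map_eq_bot_iff, (LieHom.ker_eq_bot _).mpr e.injective, le_bot_iff]

lemma lieSpan_image_eq_top {s : Set L} (hs : LieSubalgebra.lieSpan k L s = ⊤) :
    LieSubalgebra.lieSpan k L' (e '' s) = ⊤ := by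
  change LieSubalgebra.lieSpan k L' (e.toLieHom '' s) = ⊤
  rw [← LieSubalgebra.map_lieSpan (f := e.toLieHom), hs, ← LieSubalgebra.map_top,
    LieHom.range_eq_top]
  exact e.surjective

end LieEquiv

section Invariance

variable {k L L' : Type*} [Field k] [LieRing L] [LieAlgebra k L] [LieRing L'] [LieAlgebra k L']
  (e : L ≃ₗ⁅k⁆ L')
include e

lemma IsNilpotentOfClass.of_lieEquiv {c : ℕ} (h : IsNilpotentOfClass k L c) :
    IsNilpotentOfClass k L' c :=
  ⟨(e.lowerCentralSeries_eq_bot_iff c).mpr h.1,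
    fun b hb => (e.lowerCentralSeries_eq_bot_iff b).not.mpr (h.2 b hb)⟩

lemma IsCamina.of_lieEquiv (h : IsCamina k L) : IsCamina k L' := by
  intro y hy
  rw [← e.apply_symm_apply y] at hy ⊢
  have hx : e.symm y ∉ derivedIdeal k L := fun hx => hy <| by
    rw [← LieSubmodule.mem_toSubmodule, ← e.map_derivedIdeal]
    exact Submodule.mem_map_of_mem hx
  rw [e.range_ad_apply, h _ hx, e.map_derivedIdeal]

lemma MinimallyGenerated.of_lieEquiv {n : ℕ} (h : MinimallyGenerated k L n) :
    MinimallyGenerated k L' n := by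
  obtain ⟨⟨s, hcard, hs⟩, hmin⟩ := h
  refine ⟨⟨s.map ⟨e, e.injective⟩, by rw [Finset.card_map, hcard], ?_⟩, fun t ht => ?_⟩
  · rw [Finset.coe_map]
    exact e.lieSpan_image_eq_top hs
  · rw [← Finset.card_map ⟨e.symm, e.symm.injective⟩]
    refine hmin _ ?_
    rw [Finset.coe_map]
    exact e.symm.lieSpan_image_eq_top ht

lemma HasBreadthType.of_lieEquiv {S : Set ℕ} (h : HasBreadthType k L S) :
    HasBreadthType k L' S := by
  rw [HasBreadthType, ← h, ← e.surjective.range_comp]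
  exact congrArg Set.range (funext e.breadth_apply)

end Invariance

section NormForm

variable {k : Type*} [Field k]

lemma eq_zero_of_sq_add_sq_eq_zero (h : ¬ ∃ a b : k, a ^ 2 + b ^ 2 = -1) {a b : k}
    (hab : a ^ 2 + b ^ 2 = 0) : a = 0 ∧ b = 0 := by
  have key {x y : k} (hxy : x ^ 2 + y ^ 2 = 0) : x = 0 := by
    by_contra hx
    exact h ⟨y / x, 0, by field_simp; linear_combination hxy⟩
  exact ⟨key hab, key (y := a) (by linear_combination hab)⟩

namespace Quaternion

lemma eq_zero_of_normSq_eq_zero (h : ¬ ∃ a b : k, a ^ 2 + b ^ 2 = -1) {a : ℍ[k]}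
    (ha : normSq a = 0) : a = 0 := by
  rw [normSq_def'] at ha
  by_cases hs : a.re ^ 2 + a.imI ^ 2 = 0
  · have ht : a.imJ ^ 2 + a.imK ^ 2 = 0 := by linear_combination ha - hs
    obtain ⟨h₀, h₁⟩ := eq_zero_of_sq_add_sq_eq_zero h hs
    obtain ⟨h₂, h₃⟩ := eq_zero_of_sq_add_sq_eq_zero h ht
    ext <;> assumption
  · exfalso
    apply h
    -- for `a = (x, y, z, t)`: `-1 = (z² + t²) / (x² + y²)` is a sum of two squares, as
    -- `(x² + y²)(z² + t²) = (zx + ty)² + (zy - tx)²`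
    refine ⟨(a.imJ * a.re + a.imK * a.imI) / (a.re ^ 2 + a.imI ^ 2),
      (a.imJ * a.imI - a.imK * a.re) / (a.re ^ 2 + a.imI ^ 2), ?_⟩
    field_simp
    linear_combination (a.re ^ 2 + a.imI ^ 2) * ha

def imVec (q : ℍ[k]) : Fin 3 → k := ![q.imI, q.imJ, q.imK]

variable (k) in
def imStarMul : ℍ[k] →ₗ[k] ℍ[k] →ₗ[k] (Fin 3 → k) :=
  LinearMap.mk₂ k (fun a b => imVec (star a * b))
    (fun a a' b => by ext i; fin_cases i <;> simp [imVec, add_mul])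
    (fun c a b => by ext i; fin_cases i <;> simp [imVec])
    (fun a b b' => by ext i; fin_cases i <;> simp [imVec, mul_add])
    (fun c a b => by ext i; fin_cases i <;> simp [imVec])

lemma imStarMul_apply (a b : ℍ[k]) : imStarMul k a b = imVec (star a * b) := rfl

lemma isAlt_imStarMul : (imStarMul k).IsAlt := fun a => by
  ext i; fin_cases i <;> simp [imStarMul_apply, imVec, star_mul_self]

lemma imStarMul_one_surjective : Function.Surjective (imStarMul k 1) := fun w => by
  let q : ℍ[k] := ⟨0, w 0, w 1, w 2⟩
  refine ⟨q, ?_⟩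
  rw [imStarMul_apply, star_one, one_mul]
  ext i; fin_cases i <;> rfl

lemma imStarMul_surjective (h : ¬ ∃ a b : k, a ^ 2 + b ^ 2 = -1) {a : ℍ[k]} (ha : a ≠ 0) :
    Function.Surjective (imStarMul k a) := by
  intro w
  obtain ⟨q, rfl⟩ := imStarMul_one_surjective w
  have hN : normSq a ≠ 0 := fun hN => ha (eq_zero_of_normSq_eq_zero h hN)
  refine ⟨(normSq a)⁻¹ • (a * q), ?_⟩
  rw [imStarMul_apply, imStarMul_apply, mul_smul_comm, ← mul_assoc, star_mul_self,
    coe_mul_eq_smul, smul_smul, inv_mul_cancel₀ hN, one_smul, star_one, one_mul]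

end Quaternion

end NormForm

section Presentation

variable (k : Type*) [Field k]

open Quaternion

noncomputable def quotProj : FreeLieAlgebra k (Fin 4) →ₗ⁅k⁆ FreeNilp k 2 4 ⧸ idealK k :=
  (idealK k).mkQ.comp (LieIdeal.mkQ _)

noncomputable def quotGen (i : Fin 4) : FreeNilp k 2 4 ⧸ idealK k :=
  (idealK k).mkQ (gen k 2 4 i)

lemma quotProj_of (i : Fin 4) : quotProj k (FreeLieAlgebra.of k i) = quotGen k i := rfl

lemma quotProj_surjective : Function.Surjective (quotProj k) :=
  (idealK k).mkQ_surjective.comp (LieIdeal.mkQ_surjective _)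

lemma lie_lie_quot_eq_zero (x y z : FreeNilp k 2 4 ⧸ idealK k) : ⁅x, ⁅y, z⁆⁆ = 0 := by
  obtain ⟨x, rfl⟩ := quotProj_surjective k x
  obtain ⟨y, rfl⟩ := quotProj_surjective k y
  obtain ⟨z, rfl⟩ := quotProj_surjective k z
  rw [← LieHom.map_lie, ← LieHom.map_lie, quotProj, LieHom.comp_apply,
    (LieIdeal.mkQ_eq_zero _).mpr (lie_lie_mem_lowerCentralSeries_two x y z), map_zero]

lemma lie_quotGen_two_three : ⁅quotGen k 2, quotGen k 3⁆ = -⁅quotGen k 0, quotGen k 1⁆ := by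
  have h : (idealK k).mkQ (⁅gen k 2 4 0, gen k 2 4 1⁆ + ⁅gen k 2 4 2, gen k 2 4 3⁆) = 0 :=
    (LieIdeal.mkQ_eq_zero _).mpr (LieSubmodule.subset_lieSpan (by simp))
  rw [map_add, LieHom.map_lie, LieHom.map_lie] at h
  exact eq_neg_of_add_eq_zero_right h

lemma lie_quotGen_one_three : ⁅quotGen k 1, quotGen k 3⁆ = ⁅quotGen k 0, quotGen k 2⁆ := by
  have h : (idealK k).mkQ (⁅gen k 2 4 0, gen k 2 4 2⁆ - ⁅gen k 2 4 1, gen k 2 4 3⁆) = 0 :=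
    (LieIdeal.mkQ_eq_zero _).mpr (LieSubmodule.subset_lieSpan (by simp))
  rw [map_sub, LieHom.map_lie, LieHom.map_lie] at h
  exact (sub_eq_zero.mp h).symm

lemma lie_quotGen_one_two : ⁅quotGen k 1, quotGen k 2⁆ = -⁅quotGen k 0, quotGen k 3⁆ := by
  have h : (idealK k).mkQ (⁅gen k 2 4 0, gen k 2 4 3⁆ + ⁅gen k 2 4 1, gen k 2 4 2⁆) = 0 :=
    (LieIdeal.mkQ_eq_zero _).mpr (LieSubmodule.subset_lieSpan (by simp))
  rw [map_add, LieHom.map_lie, LieHom.map_lie] at h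
  exact eq_neg_of_add_eq_zero_right h

abbrev QuatModel := TwoStep (imStarMul k) isAlt_imStarMul

noncomputable def quatBasis : Basis (Fin 4) k ℍ[k] := QuaternionAlgebra.basisOneIJK _ _ _

lemma quatBasis_eq (i : Fin 4) :
    quatBasis k i = (QuaternionAlgebra.equivTuple (-1 : k) 0 (-1)).symm (Pi.single i 1) :=
  congrFun (Basis.coe_ofEquivFun (QuaternionAlgebra.linearEquivTuple (-1 : k) 0 (-1))) i

@[simp] lemma quatBasis_re (i : Fin 4) : (quatBasis k i).re = (Pi.single i 1 : Fin 4 → k) 0 := by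
  rw [quatBasis_eq]; rfl

@[simp] lemma quatBasis_imI (i : Fin 4) : (quatBasis k i).imI = (Pi.single i 1 : Fin 4 → k) 1 := by
  rw [quatBasis_eq]; rfl

@[simp] lemma quatBasis_imJ (i : Fin 4) : (quatBasis k i).imJ = (Pi.single i 1 : Fin 4 → k) 2 := by
  rw [quatBasis_eq]; rfl

@[simp] lemma quatBasis_imK (i : Fin 4) : (quatBasis k i).imK = (Pi.single i 1 : Fin 4 → k) 3 := by
  rw [quatBasis_eq]; rfl

noncomputable def freeNilpToModel : FreeNilp k 2 4 →ₗ⁅k⁆ QuatModel k :=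
  LieIdeal.liftQ _ (FreeLieAlgebra.lift k (TwoStep.inl _ _ ∘ quatBasis k))
    (lowerCentralSeries_le_ker _ TwoStep.lowerCentralSeries_two_eq_bot)

lemma freeNilpToModel_gen (i : Fin 4) :
    freeNilpToModel k (gen k 2 4 i) = TwoStep.inl _ _ (quatBasis k i) :=
  FreeLieAlgebra.lift_of_apply _ _

lemma idealK_le_ker_freeNilpToModel : idealK k ≤ (freeNilpToModel k).ker := by
  rw [idealK, LieSubmodule.lieSpan_le]
  rintro _ (rfl | rfl | rfl) <;>
  · rw [SetLike.mem_coe, LieHom.mem_ker]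
    simp only [map_add, map_sub, LieHom.map_lie, freeNilpToModel_gen, TwoStep.lie_inl_inl]
    simp only [← map_add, ← map_sub, map_eq_zero_iff _ TwoStep.inr_injective]
    ext i; fin_cases i <;> simp [imStarMul_apply, imVec]

noncomputable def toModel : FreeNilp k 2 4 ⧸ idealK k →ₗ⁅k⁆ QuatModel k :=
  (idealK k).liftQ (freeNilpToModel k) (idealK_le_ker_freeNilpToModel k)

noncomputable def quatToQuot : ℍ[k] →ₗ[k] FreeNilp k 2 4 ⧸ idealK k :=
  (quatBasis k).constr k (quotGen k)

noncomputable def imToQuot : (Fin 3 → k) →ₗ[k] FreeNilp k 2 4 ⧸ idealK k :=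
  Fintype.linearCombination k fun j : Fin 3 => ⁅quotGen k 0, quotGen k j.succ⁆

lemma lie_imToQuot (w : Fin 3 → k) (x : FreeNilp k 2 4 ⧸ idealK k) : ⁅imToQuot k w, x⁆ = 0 := by
  simp [imToQuot, Fintype.linearCombination_apply, sum_lie, smul_lie, lie_lie_quot_eq_zero]

lemma lie_quatToQuot (a b : ℍ[k]) :
    ⁅quatToQuot k a, quatToQuot k b⁆ = imToQuot k (imStarMul k a b) := by
  have key : ((LieAlgebra.ad k (FreeNilp k 2 4 ⧸ idealK k) : _ →ₗ[k] Module.End k _) :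
      _ →ₗ[k] _ →ₗ[k] _).compl₁₂ (quatToQuot k) (quatToQuot k) =
      (imStarMul k).compr₂ (imToQuot k) := by
    refine LinearMap.ext_basis_of_isAlt (quatBasis k) (fun a => by simp)
      (fun a => by simp [isAlt_imStarMul.self_eq_zero]) fun i j hij => ?_
    fin_cases i <;> fin_cases j <;> simp at hij <;>
      simp [quatToQuot, imToQuot, imStarMul_apply, imVec, Fintype.linearCombination_apply,
        Fin.sum_univ_three, lie_quotGen_two_three, lie_quotGen_one_three, lie_quotGen_one_two]
  exact LinearMap.congr_fun₂ key a b

noncomputable def ofModel : QuatModel k →ₗ⁅k⁆ FreeNilp k 2 4 ⧸ idealK k :=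
  TwoStep.lift (quatToQuot k) (imToQuot k) (lie_imToQuot k) (lie_quatToQuot k)

lemma toModel_quotGen (i : Fin 4) : toModel k (quotGen k i) = TwoStep.inl _ _ (quatBasis k i) :=
  freeNilpToModel_gen k i

lemma ofModel_toModel (x : FreeNilp k 2 4 ⧸ idealK k) : ofModel k (toModel k x) = x := by
  have h : ((ofModel k).comp (toModel k)).comp (quotProj k) = quotProj k :=
    FreeLieAlgebra.hom_ext fun i => by
      simp [quotProj_of, toModel_quotGen, ofModel, quatToQuot]
  obtain ⟨a, rfl⟩ := quotProj_surjective k x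
  exact LieHom.congr_fun h a

lemma toModel_surjective : Function.Surjective (toModel k) := by
  rw [← LieHom.range_eq_top, eq_top_iff,
    ← TwoStep.lieSpan_range_inl_comp_basis (imStarMul_one_surjective (k := k)) (quatBasis k),
    LieSubalgebra.lieSpan_le]
  rintro _ ⟨i, rfl⟩
  exact ⟨quotGen k i, toModel_quotGen k i⟩

noncomputable def quotEquivModel : (FreeNilp k 2 4 ⧸ idealK k) ≃ₗ⁅k⁆ QuatModel k :=
  LieEquiv.ofBijective (toModel k)
    ⟨Function.LeftInverse.injective (ofModel_toModel k), toModel_surjective k⟩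

end Presentation

/-- over a field in which `-1` is not a sum of two squares, the quotient
`ℒ₃/I` by the 3-dimensional central ideal `I` above is a 2-step nilpotent Camina Lie
algebra, minimally generated by 4 elements, of breadth type `(0,3)`. In particular such a
Lie algebra exists over any such field. -/
theorem camina_of_neg_one_not_sum_of_two_squares
    (k : Type*) [Field k] (h : ¬ ∃ a b : k, a ^ 2 + b ^ 2 = -1) :
    IsNilpotentOfClass k (FreeNilp k 2 4 ⧸ idealK k) 2 ∧
    IsCamina k (FreeNilp k 2 4 ⧸ idealK k) ∧
    MinimallyGenerated k (FreeNilp k 2 4 ⧸ idealK k) 4 ∧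
    HasBreadthType k (FreeNilp k 2 4 ⧸ idealK k) {0, 3} := by
  have hsurj : ∀ a ≠ 0, Function.Surjective (Quaternion.imStarMul k a) :=
    fun _ ha => Quaternion.imStarMul_surjective h ha
  have hone := Quaternion.imStarMul_one_surjective (k := k)
  let e := (quotEquivModel k).symm
  refine ⟨(TwoStep.isNilpotentOfClass_two hone).of_lieEquiv e,
    (TwoStep.isCamina hsurj).of_lieEquiv e, ?_, ?_⟩
  · simpa [Quaternion.finrank_eq_four] using (TwoStep.minimallyGenerated hone).of_lieEquiv e
  · simpa using (TwoStep.hasBreadthType hsurj).of_lieEquiv e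
end
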